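/- arXiv:2502.12329 — 9 statements merged into one kernel-verified Lean document; each statement's English description precedes it below -/
import Mathlib

section
/- Let f : ℝ^d → ℝ be continuously differentiable with a nonempty set S of global minimizers, let ∅ ≠ S̃ ⊆ S, let P(·; S̃) : ℝ^d → ℝ be nonnegative, and suppose there exist constants c₁ > 0, c₂ ≥ 0 such that ⟨∇f(x), x − proj_{S̃}(x)⟩ ≥ c₁ P(x; S̃) − c₂ for all x ∈ ℝ^d, where proj_{S̃}(x) is a point of S̃ closest to x. Let (x^k) be gradient descent iterates x^{k+1} = x^k − γ^k ∇f(x^k), where for all k the stepsize satisfies 0 < γ^k ≤ (2−α)(⟨∇f(x^k), x^k − x^k_p⟩ + c₂ + β^k)/‖∇f(x^k)‖² with 0 < α < 2, β^k > 0, and x^k_p := proj_{S̃}(x^k). Then for all k ≥ 0: ‖x^{k+1} − x^{k+1}_p‖² ≤ ‖x^k − x^k_p‖² − α c₁ γ^k P(x^k; S̃) + (2−α) β^k γ^k + 2 c₂ γ^k. -/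
/-!
The distance from the new iterate to `St` is at most its distance to the old projection `p`,
which expands as `‖x - p‖² - 2γ⟪g, x - p⟫ + γ²‖g‖²`. The stepsize bound absorbs `γ²‖g‖²` into
`(2 - α)γ(⟪g, x - p⟫ + c₂ + β)`, and the parametric assumption bounds the remaining
`-αγ⟪g, x - p⟫` by `-αγ(c₁P - c₂)`.
-/

open scoped RealInnerProductSpace

/-- Since `b / 0 = 0`, the hypotheses force `c ≠ 0`: a vanishing gradient makes the stepsize
bound `γ ≤ _ / ‖∇f‖²` contradict `0 < γ`. -/
lemma mul_le_of_pos_of_le_div {a b c : ℝ} (ha : 0 < a) (hc : 0 ≤ c) (h : a ≤ b / c) :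
    a * c ≤ b := by
  obtain rfl | hc := hc.eq_or_lt
  · simp only [div_zero] at h
    linarith
  · exact (le_div_iff₀ hc).1 h

section GradientStep

variable {E : Type*} [NormedAddCommGroup E] [InnerProductSpace ℝ E]

lemma norm_sub_smul_sq (y g : E) (γ : ℝ) :
    ‖y - γ • g‖ ^ 2 = ‖y‖ ^ 2 - 2 * γ * ⟪g, y⟫ + γ ^ 2 * ‖g‖ ^ 2 := by
  rw [norm_sub_sq_real, real_inner_smul_right, norm_smul, mul_pow, Real.norm_eq_abs, sq_abs,
    real_inner_comm]
  ring

theorem norm_sub_smul_sub_sq_le {x p g : E} {γ α β c₁ c₂ P : ℝ} (hγ : 0 ≤ γ) (hα : 0 ≤ α)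
    (hstep : γ * ‖g‖ ^ 2 ≤ (2 - α) * (⟪g, x - p⟫ + c₂ + β))
    (hass : c₁ * P - c₂ ≤ ⟪g, x - p⟫) :
    ‖x - γ • g - p‖ ^ 2 ≤
      ‖x - p‖ ^ 2 - α * c₁ * γ * P + (2 - α) * β * γ + 2 * c₂ * γ := by
  have hquad : γ ^ 2 * ‖g‖ ^ 2 ≤ γ * ((2 - α) * (⟪g, x - p⟫ + c₂ + β)) := by
    rw [pow_two γ, mul_assoc]
    exact mul_le_mul_of_nonneg_left hstep hγ
  have hlin : α * γ * (c₁ * P - c₂) ≤ α * γ * ⟪g, x - p⟫ :=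
    mul_le_mul_of_nonneg_left hass (mul_nonneg hα hγ)
  rw [sub_right_comm, norm_sub_smul_sq]
  linarith

end GradientStep

theorem descent_inequality_deterministic_general
    {d : ℕ} (f : EuclideanSpace ℝ (Fin d) → ℝ)
    (St : Set (EuclideanSpace ℝ (Fin d)))
    (proj : EuclideanSpace ℝ (Fin d) → EuclideanSpace ℝ (Fin d))
    (hproj : ∀ y, proj y ∈ St ∧ ∀ z ∈ St, ‖y - proj y‖ ≤ ‖y - z‖)
    (P : EuclideanSpace ℝ (Fin d) → ℝ)
    (c₁ c₂ : ℝ)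
    (hass : ∀ y, c₁ * P y - c₂ ≤ ⟪gradient f y, y - proj y⟫)
    (α : ℝ) (hα₁ : 0 < α)
    (β : ℕ → ℝ)
    (x : ℕ → EuclideanSpace ℝ (Fin d)) (γ : ℕ → ℝ)
    (hupd : ∀ k, x (k + 1) = x k - γ k • gradient f (x k))
    (hγ : ∀ k, 0 < γ k ∧
      γ k ≤ (2 - α) * (⟪gradient f (x k), x k - proj (x k)⟫ + c₂ + β k) /
        ‖gradient f (x k)‖ ^ 2) :
    ∀ k : ℕ, ‖x (k + 1) - proj (x (k + 1))‖ ^ 2 ≤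
      ‖x k - proj (x k)‖ ^ 2 - α * c₁ * γ k * P (x k)
        + (2 - α) * β k * γ k + 2 * c₂ * γ k := by
  intro k
  obtain ⟨hγpos, hγle⟩ := hγ k
  have hstep := mul_le_of_pos_of_le_div hγpos (sq_nonneg _) hγle
  have hprojk : ‖x (k + 1) - proj (x (k + 1))‖ ≤ ‖x (k + 1) - proj (x k)‖ :=
    (hproj (x (k + 1))).2 _ (hproj (x k)).1
  calc ‖x (k + 1) - proj (x (k + 1))‖ ^ 2 ≤ ‖x (k + 1) - proj (x k)‖ ^ 2 := by gcongr
    _ ≤ _ := by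
      rw [hupd k]
      exact norm_sub_smul_sub_sq_le hγpos.le hα₁.le hstep (hass (x k))

/-- Theorem 1 (descent inequality) of "A Novel Unified Parametric Assumption for
Nonconvex Optimization": under the unified parametric assumption, gradient descent
with a suitably bounded stepsize satisfies the stated per-iteration descent inequality. -/
theorem descent_inequality_deterministic
    {d : ℕ} (f : EuclideanSpace ℝ (Fin d) → ℝ)
    (hf : ContDiff ℝ 1 f)
    (S St : Set (EuclideanSpace ℝ (Fin d)))
    (hSne : S.Nonempty)
    (hSmin : ∀ s ∈ S, ∀ y, f s ≤ f y)
    (hStS : St ⊆ S) (hStne : St.Nonempty)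
    (proj : EuclideanSpace ℝ (Fin d) → EuclideanSpace ℝ (Fin d))
    (hproj : ∀ y, proj y ∈ St ∧ ∀ z ∈ St, ‖y - proj y‖ ≤ ‖y - z‖)
    (P : EuclideanSpace ℝ (Fin d) → ℝ) (hP : ∀ y, 0 ≤ P y)
    (c₁ c₂ : ℝ) (hc₁ : 0 < c₁) (hc₂ : 0 ≤ c₂)
    (hass : ∀ y, c₁ * P y - c₂ ≤ ⟪gradient f y, y - proj y⟫)
    (α : ℝ) (hα₁ : 0 < α) (hα₂ : α < 2)
    (β : ℕ → ℝ) (hβ : ∀ k, 0 < β k)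
    (x : ℕ → EuclideanSpace ℝ (Fin d)) (γ : ℕ → ℝ)
    (hupd : ∀ k, x (k + 1) = x k - γ k • gradient f (x k))
    (hγ : ∀ k, 0 < γ k ∧
      γ k ≤ (2 - α) * (⟪gradient f (x k), x k - proj (x k)⟫ + c₂ + β k) /
        ‖gradient f (x k)‖ ^ 2) :
    ∀ k : ℕ, ‖x (k + 1) - proj (x (k + 1))‖ ^ 2 ≤
      ‖x k - proj (x k)‖ ^ 2 - α * c₁ * γ k * P (x k)
        + (2 - α) * β k * γ k + 2 * c₂ * γ k :=
  descent_inequality_deterministic_general f St proj hproj P c₁ c₂ hass α hα₁ β x γ hupd hγ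
end

section
/- Let f : ℝ^d → ℝ be continuously differentiable with a nonempty set S of global minimizers, let ∅ ≠ S̃ ⊆ S, let P(·; S̃) : ℝ^d → ℝ be nonnegative, and suppose there exist constants c₁ > 0, c₂ ≥ 0 such that ⟨∇f(x), x − proj_{S̃}(x)⟩ ≥ c₁ P(x; S̃) − c₂ for all x ∈ ℝ^d. Let (x^k) be iterates x^{k+1} = x^k − γ^k ∇f(x^k) with stepsizes satisfying 0 < γ^k ≤ (2−α)(⟨∇f(x^k), x^k − x^k_p⟩ + c₂ + β^k)/‖∇f(x^k)‖² for all k, where 0 < α < 2, β^k > 0, x^k_p := proj_{S̃}(x^k). Then for every K ≥ 0: min_{0≤k≤K} P(x^k; S̃) ≤ (Σ_{k=0}^{K} γ^k P(x^k; S̃))/(Σ_{k=0}^{K} γ^k) ≤ ‖x^0 − x^0_p‖²/(α c₁ Σ_{k=0}^{K} γ^k) + C^K, where C^K := (Σ_{k=0}^{K} (2−α) β^k γ^k)/(α c₁ Σ_{k=0}^{K} γ^k) + 2c₂/(α c₁). -/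
open scoped RealInnerProductSpace

/-!
The squared distance `aₖ = ‖xᵏ - proj xᵏ‖²` to `S̃` is a Lyapunov function. Since `proj xᵏ` is a
competitor for `xᵏ⁺¹`, expanding `‖xᵏ⁺¹ - proj xᵏ‖²` and using the stepsize bound and the
parametric assumption gives
`α c₁ γₖ P(xᵏ) ≤ aₖ - aₖ₊₁ + (2 - α) βₖ γₖ + 2 c₂ γₖ`;
summing telescopes, and dividing by `α c₁ ∑ γₖ` gives the bound on the weighted average, which
dominates the minimum.
-/

/-- The stepsize bound forces a nonzero denominator, since `γ / 0 = 0` in Lean. -/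
lemma mul_le_of_pos_of_le_div_s1 {γ a b : ℝ} (hγ : 0 < γ) (h : γ ≤ a / b) (hb : 0 ≤ b) :
    γ * b ≤ a := by
  rcases hb.eq_or_lt with rfl | hb
  · rw [div_zero] at h
    exact absurd hγ h.not_gt
  · exact (le_div_iff₀ hb).1 h

lemma Finset.inf'_le_sum_mul_div_sum {ι : Type*} {s : Finset ι} (hs : s.Nonempty)
    (w f : ι → ℝ) (hw : ∀ i ∈ s, 0 ≤ w i) (hpos : 0 < ∑ i ∈ s, w i) :
    s.inf' hs f ≤ (∑ i ∈ s, w i * f i) / ∑ i ∈ s, w i := by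
  rw [le_div_iff₀ hpos, Finset.mul_sum]
  exact Finset.sum_le_sum fun i hi =>
    (mul_comm _ _).le.trans (mul_le_mul_of_nonneg_left (s.inf'_le f hi) (hw i hi))

lemma Finset.sum_range_le_of_le_sub_add {u a e : ℕ → ℝ}
    (h : ∀ k, u k ≤ a k - a (k + 1) + e k) (n : ℕ) (ha : 0 ≤ a n) :
    ∑ k ∈ Finset.range n, u k ≤ a 0 + ∑ k ∈ Finset.range n, e k := by
  have hsum := Finset.sum_le_sum fun k (_ : k ∈ Finset.range n) => h k
  rw [Finset.sum_add_distrib, Finset.sum_range_sub' a] at hsum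
  linarith

lemma sq_norm_sub_smul_sub_le {E : Type*} [NormedAddCommGroup E] [InnerProductSpace ℝ E]
    {x p p' g : E} {γ α c b : ℝ} (hγ : 0 ≤ γ)
    (hstep : γ * ‖g‖ ^ 2 ≤ (2 - α) * (⟪g, x - p⟫ + c + b))
    (hp' : ‖x - γ • g - p'‖ ≤ ‖x - γ • g - p‖) :
    ‖x - γ • g - p'‖ ^ 2 ≤ ‖x - p‖ ^ 2 - α * γ * ⟪g, x - p⟫ + (2 - α) * γ * (c + b) := by
  have hexpand : ‖x - γ • g - p‖ ^ 2 = ‖x - p‖ ^ 2 - 2 * γ * ⟪g, x - p⟫ + γ * (γ * ‖g‖ ^ 2) := by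
    rw [sub_right_comm, norm_sub_sq_real, real_inner_smul_right, norm_smul, real_inner_comm,
      Real.norm_eq_abs, mul_pow, sq_abs]
    ring
  calc ‖x - γ • g - p'‖ ^ 2 ≤ ‖x - γ • g - p‖ ^ 2 := pow_le_pow_left₀ (norm_nonneg _) hp' 2
    _ ≤ _ := by rw [hexpand]; nlinarith [mul_le_mul_of_nonneg_left hstep hγ]

theorem min_progress_bound_deterministic_general
    {d : ℕ} (f : EuclideanSpace ℝ (Fin d) → ℝ)
    (St : Set (EuclideanSpace ℝ (Fin d)))
    (proj : EuclideanSpace ℝ (Fin d) → EuclideanSpace ℝ (Fin d))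
    (hproj : ∀ y, proj y ∈ St ∧ ∀ z ∈ St, ‖y - proj y‖ ≤ ‖y - z‖)
    (P : EuclideanSpace ℝ (Fin d) → ℝ)
    (c₁ c₂ : ℝ) (hc₁ : 0 < c₁)
    (hass : ∀ y, c₁ * P y - c₂ ≤ ⟪gradient f y, y - proj y⟫)
    (α : ℝ) (hα₁ : 0 < α)
    (β : ℕ → ℝ)
    (x : ℕ → EuclideanSpace ℝ (Fin d)) (γ : ℕ → ℝ)
    (hupd : ∀ k, x (k + 1) = x k - γ k • gradient f (x k))
    (hγ : ∀ k, 0 < γ k ∧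
      γ k ≤ (2 - α) * (⟪gradient f (x k), x k - proj (x k)⟫ + c₂ + β k) /
        ‖gradient f (x k)‖ ^ 2)
    (K : ℕ) :
    (Finset.range (K + 1)).inf' Finset.nonempty_range_add_one (fun k => P (x k)) ≤
        (∑ k ∈ Finset.range (K + 1), γ k * P (x k)) / (∑ k ∈ Finset.range (K + 1), γ k)
    ∧ (∑ k ∈ Finset.range (K + 1), γ k * P (x k)) / (∑ k ∈ Finset.range (K + 1), γ k) ≤
        ‖x 0 - proj (x 0)‖ ^ 2 / (α * c₁ * ∑ k ∈ Finset.range (K + 1), γ k)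
        + ((∑ k ∈ Finset.range (K + 1), (2 - α) * β k * γ k) /
            (α * c₁ * ∑ k ∈ Finset.range (K + 1), γ k)
          + 2 * c₂ / (α * c₁)) := by
  set a : ℕ → ℝ := fun k => ‖x k - proj (x k)‖ ^ 2
  have hT : 0 < ∑ k ∈ Finset.range (K + 1), γ k :=
    Finset.sum_pos (fun k _ => (hγ k).1) Finset.nonempty_range_add_one
  have hdescent : ∀ k, α * c₁ * (γ k * P (x k)) ≤
      a k - a (k + 1) + ((2 - α) * β k * γ k + 2 * c₂ * γ k) := by
    intro k
    have hnext := (hproj (x (k + 1))).2 _ (hproj (x k)).1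
    rw [hupd k] at hnext
    have hdist := sq_norm_sub_smul_sub_le (hγ k).1.le
      (mul_le_of_pos_of_le_div_s1 (hγ k).1 (hγ k).2 (by positivity)) hnext
    rw [← hupd k] at hdist
    have hprogress := mul_le_mul_of_nonneg_left (hass (x k)) (mul_pos hα₁ (hγ k).1).le
    linear_combination hdist + hprogress
  have hsum := Finset.sum_range_le_of_le_sub_add hdescent (K + 1) (by positivity)
  rw [← Finset.mul_sum, Finset.sum_add_distrib, ← Finset.mul_sum] at hsum
  refine ⟨Finset.inf'_le_sum_mul_div_sum _ _ _ (fun k _ => (hγ k).1.le) hT, ?_⟩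
  calc (∑ k ∈ Finset.range (K + 1), γ k * P (x k)) / ∑ k ∈ Finset.range (K + 1), γ k
      = α * c₁ * (∑ k ∈ Finset.range (K + 1), γ k * P (x k)) /
          (α * c₁ * ∑ k ∈ Finset.range (K + 1), γ k) :=
        (mul_div_mul_left _ _ (mul_pos hα₁ hc₁).ne').symm
    _ ≤ _ := div_le_div_of_nonneg_right hsum (by positivity)
    _ = _ := by field_simp; ring

/-- Theorem 1 (averaged bound) of "A Novel Unified Parametric Assumption for Nonconvex
Optimization": under the unified parametric assumption, the minimum (and the stepsize-weighted
average) of the progress function along the gradient descent trajectory is bounded as stated. -/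
theorem min_progress_bound_deterministic
    {d : ℕ} (f : EuclideanSpace ℝ (Fin d) → ℝ)
    (hf : ContDiff ℝ 1 f)
    (S St : Set (EuclideanSpace ℝ (Fin d)))
    (hSne : S.Nonempty)
    (hSmin : ∀ s ∈ S, ∀ y, f s ≤ f y)
    (hStS : St ⊆ S) (hStne : St.Nonempty)
    (proj : EuclideanSpace ℝ (Fin d) → EuclideanSpace ℝ (Fin d))
    (hproj : ∀ y, proj y ∈ St ∧ ∀ z ∈ St, ‖y - proj y‖ ≤ ‖y - z‖)
    (P : EuclideanSpace ℝ (Fin d) → ℝ) (hP : ∀ y, 0 ≤ P y)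
    (c₁ c₂ : ℝ) (hc₁ : 0 < c₁) (hc₂ : 0 ≤ c₂)
    (hass : ∀ y, c₁ * P y - c₂ ≤ ⟪gradient f y, y - proj y⟫)
    (α : ℝ) (hα₁ : 0 < α) (hα₂ : α < 2)
    (β : ℕ → ℝ) (hβ : ∀ k, 0 < β k)
    (x : ℕ → EuclideanSpace ℝ (Fin d)) (γ : ℕ → ℝ)
    (hupd : ∀ k, x (k + 1) = x k - γ k • gradient f (x k))
    (hγ : ∀ k, 0 < γ k ∧
      γ k ≤ (2 - α) * (⟪gradient f (x k), x k - proj (x k)⟫ + c₂ + β k) /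
        ‖gradient f (x k)‖ ^ 2)
    (K : ℕ) :
    (Finset.range (K + 1)).inf' Finset.nonempty_range_add_one (fun k => P (x k)) ≤
        (∑ k ∈ Finset.range (K + 1), γ k * P (x k)) / (∑ k ∈ Finset.range (K + 1), γ k)
    ∧ (∑ k ∈ Finset.range (K + 1), γ k * P (x k)) / (∑ k ∈ Finset.range (K + 1), γ k) ≤
        ‖x 0 - proj (x 0)‖ ^ 2 / (α * c₁ * ∑ k ∈ Finset.range (K + 1), γ k)
        + ((∑ k ∈ Finset.range (K + 1), (2 - α) * β k * γ k) /
            (α * c₁ * ∑ k ∈ Finset.range (K + 1), γ k)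
          + 2 * c₂ / (α * c₁)) :=
  min_progress_bound_deterministic_general f St proj hproj P c₁ c₂ hc₁ hass α hα₁ β x γ hupd hγ K
end

section
/- Let f : ℝ^d → ℝ be continuously differentiable and L-smooth (i.e., ∇f is L-Lipschitz), with a nonempty set S of global minimizers, minimal value f⋆, ∅ ≠ S̃ ⊆ S, and suppose there exist c₁ > 0, c₂ ≥ 0 with ⟨∇f(x), x − proj_{S̃}(x)⟩ ≥ c₁ (f(x) − f⋆) − c₂ for all x ∈ ℝ^d. Let (x^k) be iterates x^{k+1} = x^k − γ^k ∇f(x^k) with the Polyak-type stepsize γ^k = c₁ (f(x^k) − f⋆)/‖∇f(x^k)‖² (defined whenever ∇f(x^k) ≠ 0). Then for every K ≥ 0: min_{0≤k≤K} (f(x^k) − f⋆) ≤ 2L ‖x^0 − x^0_p‖²/(c₁² (K+1)) + 2c₂/c₁, where x^0_p := proj_{S̃}(x^0). -/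
open scoped RealInnerProductSpace

/-!
Let `D k = ‖x k - p k‖ ^ 2` with `p k = proj (x k)` and `P k = f (x k) - f⋆`. Since `p k ∈ S̃`,
`D (k + 1) ≤ ‖x k - p k - γ k • ∇f (x k)‖ ^ 2`, and expanding with the assumption on
`⟪∇f, x - proj x⟫` and `γ k ^ 2 ‖∇f (x k)‖ ^ 2 = γ k c₁ P k` gives
`D (k + 1) ≤ D k - γ k (c₁ P k - 2 c₂)`. The descent lemma at `x - L⁻¹ ∇f x` gives
`‖∇f x‖ ^ 2 ≤ 2 L (f x - f⋆)`, so the Polyak step is at least `c₁ / (2 L)`. Hence while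
`P k > 2 c₂ / c₁`, `D` decreases by at least `c₁ ^ 2 / (2 L) (P k - 2 c₂ / c₁)`, and telescoping
over `k ≤ K` with `D ≥ 0` bounds the minimum.
-/

section Smooth

variable {E : Type*} [NormedAddCommGroup E] [InnerProductSpace ℝ E] [CompleteSpace E]
  {f : E → ℝ} {L : ℝ}

theorem hasDerivAt_comp_add_smul (hf : Differentiable ℝ f) (a v : E) (t : ℝ) :
    HasDerivAt (fun t : ℝ => f (a + t • v)) ⟪gradient f (a + t • v), v⟫ t := by
  have hline : HasDerivAt (fun t : ℝ => a + t • v) v t := by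
    simpa using ((hasDerivAt_id t).smul_const v).const_add a
  rw [inner_gradient_left]
  exact (hf (a + t • v)).hasFDerivAt.comp_hasDerivAt t hline

theorem le_add_inner_gradient_add_sq (hf : Differentiable ℝ f)
    (hsmooth : ∀ y z, ‖gradient f y - gradient f z‖ ≤ L * ‖y - z‖) (a v : E) :
    f (a + v) ≤ f a + ⟪gradient f a, v⟫ + L / 2 * ‖v‖ ^ 2 := by
  have hderiv_le : ∀ t ∈ Set.Ico (0 : ℝ) 1,
      ⟪gradient f (a + t • v), v⟫ ≤ ⟪gradient f a, v⟫ + L * ‖v‖ ^ 2 * t := by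
    rintro t ⟨ht, -⟩
    have hlip : ‖gradient f (a + t • v) - gradient f a‖ ≤ L * ‖v‖ * t := by
      simpa [norm_smul, abs_of_nonneg ht, mul_comm, mul_left_comm] using hsmooth (a + t • v) a
    calc ⟪gradient f (a + t • v), v⟫
        = ⟪gradient f a, v⟫ + ⟪gradient f (a + t • v) - gradient f a, v⟫ := by
          rw [inner_sub_left]; ring
      _ ≤ ⟪gradient f a, v⟫ + L * ‖v‖ * t * ‖v‖ := by
          gcongr
          exact (real_inner_le_norm _ _).trans (by gcongr)
      _ = ⟪gradient f a, v⟫ + L * ‖v‖ ^ 2 * t := by ring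
  have hbound : ∀ t : ℝ, HasDerivAt
      (fun t : ℝ => f a + t * ⟪gradient f a, v⟫ + L / 2 * ‖v‖ ^ 2 * t ^ 2)
      (⟪gradient f a, v⟫ + L * ‖v‖ ^ 2 * t) t := by
    intro t
    exact ((((hasDerivAt_id t).mul_const ⟪gradient f a, v⟫).const_add (f a)).add
      ((hasDerivAt_pow 2 t).const_mul (L / 2 * ‖v‖ ^ 2))).congr_deriv (by simp; ring)
  simpa using image_le_of_deriv_right_le_deriv_boundary
    (fun t _ => (hasDerivAt_comp_add_smul hf a v t).continuousAt.continuousWithinAt)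
    (fun t _ => (hasDerivAt_comp_add_smul hf a v t).hasDerivWithinAt)
    (by simp) (fun t _ => (hbound t).continuousAt.continuousWithinAt)
    (fun t _ => (hbound t).hasDerivWithinAt) hderiv_le (Set.right_mem_Icc.2 zero_le_one)

theorem norm_gradient_sq_le (hf : Differentiable ℝ f) (hL : 0 < L)
    (hsmooth : ∀ y z, ‖gradient f y - gradient f z‖ ≤ L * ‖y - z‖)
    {fstar : ℝ} (hlow : ∀ y, fstar ≤ f y) (a : E) :
    ‖gradient f a‖ ^ 2 ≤ 2 * L * (f a - fstar) := by
  have hdescent := le_add_inner_gradient_add_sq hf hsmooth a (-L⁻¹ • gradient f a)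
  rw [inner_smul_right, real_inner_self_eq_norm_sq, norm_smul, mul_pow, norm_neg,
    norm_inv, Real.norm_of_nonneg hL.le] at hdescent
  have hquad : L / 2 * (L⁻¹ ^ 2 * ‖gradient f a‖ ^ 2) = L⁻¹ * ‖gradient f a‖ ^ 2 / 2 := by
    field_simp
  have hgap : L⁻¹ * ‖gradient f a‖ ^ 2 ≤ 2 * (f a - fstar) := by
    linarith [hlow (a + -L⁻¹ • gradient f a)]
  rwa [inv_mul_le_iff₀ hL, ← mul_assoc, mul_comm L 2] at hgap

end Smooth

section PolyakStep

variable {E : Type*} [NormedAddCommGroup E] [InnerProductSpace ℝ E]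

theorem norm_sub_polyak_smul_sq_le {u g : E} {a c : ℝ} (ha : 0 ≤ a)
    (hinner : a - c ≤ ⟪g, u⟫) :
    ‖u - (a / ‖g‖ ^ 2) • g‖ ^ 2 ≤ ‖u‖ ^ 2 - a / ‖g‖ ^ 2 * (a - 2 * c) := by
  set γ := a / ‖g‖ ^ 2
  have hγ : 0 ≤ γ := by positivity
  have hγ_sq : γ ^ 2 * ‖g‖ ^ 2 = γ * a := by
    rcases eq_or_ne g 0 with rfl | hg
    · simp [γ]
    · simp only [γ]; field_simp
  calc ‖u - γ • g‖ ^ 2 = ‖u‖ ^ 2 - 2 * (γ * ⟪g, u⟫) + γ ^ 2 * ‖g‖ ^ 2 := by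
        rw [norm_sub_sq_real, real_inner_smul_right, real_inner_comm, norm_smul, mul_pow,
          Real.norm_eq_abs, sq_abs]
    _ ≤ ‖u‖ ^ 2 - 2 * (γ * (a - c)) + γ * a := by
        rw [hγ_sq]; gcongr
    _ = ‖u‖ ^ 2 - γ * (a - 2 * c) := by ring

theorem norm_sub_polyak_smul_sq_le_of_gap {u g : E} {L P c₁ c₂ : ℝ} (hL : 0 < L)
    (hc₁ : 0 < c₁) (hc₂ : 0 ≤ c₂) (hgrad : ‖g‖ ^ 2 ≤ 2 * L * P)
    (hinner : c₁ * P - c₂ ≤ ⟪g, u⟫) (hgap : 2 * c₂ / c₁ < P) :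
    ‖u - (c₁ * P / ‖g‖ ^ 2) • g‖ ^ 2 ≤ ‖u‖ ^ 2 - c₁ ^ 2 / (2 * L) * (P - 2 * c₂ / c₁) := by
  have hgap' : 2 * c₂ < c₁ * P := by rwa [div_lt_iff₀' hc₁] at hgap
  have hg : 0 < ‖g‖ ^ 2 := by
    refine pow_pos (norm_pos_iff.2 fun hg => ?_) 2
    rw [hg, inner_zero_left] at hinner
    linarith
  have hstep : c₁ / (2 * L) ≤ c₁ * P / ‖g‖ ^ 2 := by
    rw [div_le_div_iff₀ (by positivity) hg]
    nlinarith
  calc ‖u - (c₁ * P / ‖g‖ ^ 2) • g‖ ^ 2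
      ≤ ‖u‖ ^ 2 - c₁ * P / ‖g‖ ^ 2 * (c₁ * P - 2 * c₂) :=
        norm_sub_polyak_smul_sq_le (by linarith) hinner
    _ ≤ ‖u‖ ^ 2 - c₁ / (2 * L) * (c₁ * P - 2 * c₂) := by gcongr
    _ = ‖u‖ ^ 2 - c₁ ^ 2 / (2 * L) * (P - 2 * c₂ / c₁) := by field_simp

end PolyakStep

theorem inf'_range_le_div_add_of_le_sub_mul {D P : ℕ → ℝ} {α β : ℝ} (hα : 0 < α)
    (hD : ∀ k, 0 ≤ D k) (hstep : ∀ k, β < P k → D (k + 1) ≤ D k - α * (P k - β)) (K : ℕ) :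
    (Finset.range (K + 1)).inf' ⟨0, Finset.mem_range.mpr (Nat.succ_pos K)⟩ P ≤
      D 0 / (α * (K + 1)) + β := by
  set m := (Finset.range (K + 1)).inf' ⟨0, Finset.mem_range.mpr (Nat.succ_pos K)⟩ P
  rcases le_or_gt m β with hm | hm
  · have : 0 ≤ D 0 / (α * (K + 1)) := div_nonneg (hD 0) (by positivity)
    linarith
  have hm_le : ∀ k ≤ K, m ≤ P k := fun k hk =>
    Finset.inf'_le _ (Finset.mem_range.2 (Nat.lt_succ_of_le hk))
  have htelescope : ∀ k ≤ K + 1, D k + k * (α * (m - β)) ≤ D 0 := by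
    intro k hk
    induction k with
    | zero => simp
    | succ n ih =>
      have hn : m ≤ P n := hm_le n (Nat.lt_succ_iff.1 hk)
      have := hstep n (hm.trans_le hn)
      have := ih (Nat.le_of_succ_le hk)
      push_cast
      nlinarith
  have := htelescope (K + 1) le_rfl
  rw [← sub_le_iff_le_add, le_div_iff₀ (by positivity)]
  push_cast at this
  nlinarith [hD (K + 1)]

theorem polyak_stepsize_smooth_rate_general
    {d : ℕ} (f : EuclideanSpace ℝ (Fin d) → ℝ)
    (hf : ContDiff ℝ 1 f)
    (L : ℝ) (hL : 0 < L)
    (hsmooth : ∀ y z, ‖gradient f y - gradient f z‖ ≤ L * ‖y - z‖)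
    (S St : Set (EuclideanSpace ℝ (Fin d)))
    (hSne : S.Nonempty)
    (hSmin : ∀ s ∈ S, ∀ y, f s ≤ f y)
    (fstar : ℝ) (hfstar : ∀ s ∈ S, f s = fstar)
    (proj : EuclideanSpace ℝ (Fin d) → EuclideanSpace ℝ (Fin d))
    (hproj : ∀ y, proj y ∈ St ∧ ∀ z ∈ St, ‖y - proj y‖ ≤ ‖y - z‖)
    (c₁ c₂ : ℝ) (hc₁ : 0 < c₁) (hc₂ : 0 ≤ c₂)
    (hass : ∀ y, c₁ * (f y - fstar) - c₂ ≤ ⟪gradient f y, y - proj y⟫)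
    (x : ℕ → EuclideanSpace ℝ (Fin d)) (γ : ℕ → ℝ)
    (hupd : ∀ k, x (k + 1) = x k - γ k • gradient f (x k))
    (hγ : ∀ k, γ k = c₁ * (f (x k) - fstar) / ‖gradient f (x k)‖ ^ 2)
    (K : ℕ) :
    (Finset.range (K + 1)).inf' ⟨0, Finset.mem_range.mpr (Nat.succ_pos K)⟩ (fun k => f (x k) - fstar) ≤
      2 * L * ‖x 0 - proj (x 0)‖ ^ 2 / (c₁ ^ 2 * (K + 1)) + 2 * c₂ / c₁ := by
  obtain ⟨s, hs⟩ := hSne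
  have hlow : ∀ y, fstar ≤ f y := fun y => hfstar s hs ▸ hSmin s hs y
  have hstep : ∀ k, 2 * c₂ / c₁ < f (x k) - fstar →
      ‖x (k + 1) - proj (x (k + 1))‖ ^ 2 ≤
        ‖x k - proj (x k)‖ ^ 2 - c₁ ^ 2 / (2 * L) * (f (x k) - fstar - 2 * c₂ / c₁) := by
    intro k hgap
    have hnearest : ‖x (k + 1) - proj (x (k + 1))‖ ≤ ‖x (k + 1) - proj (x k)‖ :=
      (hproj _).2 _ (hproj (x k)).1
    have hshift : x (k + 1) - proj (x k) = (x k - proj (x k)) - γ k • gradient f (x k) := by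
      rw [hupd, sub_right_comm]
    calc ‖x (k + 1) - proj (x (k + 1))‖ ^ 2 ≤ ‖x (k + 1) - proj (x k)‖ ^ 2 := by gcongr
      _ ≤ _ := by
        rw [hshift, hγ]
        exact norm_sub_polyak_smul_sq_le_of_gap hL hc₁ hc₂
          (norm_gradient_sq_le (hf.differentiable one_ne_zero) hL hsmooth hlow _) (hass _) hgap
  have hrate := inf'_range_le_div_add_of_le_sub_mul (by positivity)
    (fun k => sq_nonneg ‖x k - proj (x k)‖) hstep K
  convert hrate using 2
  field_simp

/-- Corollary 1: under the unified parametric assumption with progress function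
`P(x) = f(x) − f⋆`, for an `L`-smooth `f` and the Polyak stepsize, gradient descent
achieves an `O(1/K)` rate up to the neighborhood `2c₂/c₁`. -/
theorem polyak_stepsize_smooth_rate
    {d : ℕ} (f : EuclideanSpace ℝ (Fin d) → ℝ)
    (hf : ContDiff ℝ 1 f)
    (L : ℝ) (hL : 0 < L)
    (hsmooth : ∀ y z, ‖gradient f y - gradient f z‖ ≤ L * ‖y - z‖)
    (S St : Set (EuclideanSpace ℝ (Fin d)))
    (hSne : S.Nonempty)
    (hSmin : ∀ s ∈ S, ∀ y, f s ≤ f y)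
    (fstar : ℝ) (hfstar : ∀ s ∈ S, f s = fstar)
    (hStS : St ⊆ S) (hStne : St.Nonempty)
    (proj : EuclideanSpace ℝ (Fin d) → EuclideanSpace ℝ (Fin d))
    (hproj : ∀ y, proj y ∈ St ∧ ∀ z ∈ St, ‖y - proj y‖ ≤ ‖y - z‖)
    (c₁ c₂ : ℝ) (hc₁ : 0 < c₁) (hc₂ : 0 ≤ c₂)
    (hass : ∀ y, c₁ * (f y - fstar) - c₂ ≤ ⟪gradient f y, y - proj y⟫)
    (x : ℕ → EuclideanSpace ℝ (Fin d)) (γ : ℕ → ℝ)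
    (hupd : ∀ k, x (k + 1) = x k - γ k • gradient f (x k))
    (hγ : ∀ k, γ k = c₁ * (f (x k) - fstar) / ‖gradient f (x k)‖ ^ 2)
    (K : ℕ) :
    (Finset.range (K + 1)).inf' ⟨0, Finset.mem_range.mpr (Nat.succ_pos K)⟩ (fun k => f (x k) - fstar) ≤
      2 * L * ‖x 0 - proj (x 0)‖ ^ 2 / (c₁ ^ 2 * (K + 1)) + 2 * c₂ / c₁ :=
  polyak_stepsize_smooth_rate_general f hf L hL hsmooth S St hSne hSmin fstar hfstar proj hproj c₁
    c₂ hc₁ hc₂ hass x γ hupd hγ K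
end

section
/- Let f : ℝ^d → ℝ be continuously differentiable with a nonempty set S of global minimizers, ∅ ≠ S̃ ⊆ S, P(·; S̃) nonnegative, and suppose there exist c₁ > 0, c₂ ≥ 0 with ⟨∇f(x), x − proj_{S̃}(x)⟩ ≥ c₁ P(x; S̃) − c₂ for all x. Assume further that ‖∇f(x)‖ ≤ G for all x ∈ ℝ^d. Let (x^k) be iterates x^{k+1} = x^k − γ^k ∇f(x^k) with γ^k = (2−α)(c₁ P(x^k; S̃) + β^k)/‖∇f(x^k)‖², where 0 < α < 2 and β^k > 0. Then for every K ≥ 0: min_{0≤k≤K} P(x^k; S̃) ≤ G ‖x^0 − x^0_p‖/(√((2−α)α) c₁ √(K+1)) + C^K, where C^K := (Σ_{k=0}^{K} (2−α) β^k γ^k)/(α c₁ Σ_{k=0}^{K} γ^k) + 2c₂/(α c₁) and x^0_p := proj_{S̃}(x^0). -/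
/-!
Measure the distance of the iterates to `S̃` by `rₖ = ‖xᵏ - proj xᵏ‖`. Since `proj xᵏ` is a
competitor for the projection of `xᵏ⁺¹`, expanding `‖xᵏ - γᵏ ∇f(xᵏ) - proj xᵏ‖²` and using the
parametric assumption together with the Polyak-type choice `γᵏ ‖∇f(xᵏ)‖² = (2-α)(c₁ Pₖ + βᵏ)`
gives `γᵏ (α c₁ Pₖ - 2c₂ - (2-α)βᵏ) ≤ rₖ² - rₖ₊₁²`. Telescoping bounds
`(min P - Cᴷ) · α c₁ ∑ γᵏ` by `r₀²`, while `‖∇f‖ ≤ G` gives `∑ γᵏ ≥ (K+1)(2-α) c₁ min P / G²`;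
multiplying the two yields `(min P - Cᴷ)² ≤ G² r₀² / ((2-α) α c₁² (K+1))`. If instead some
iterate is stationary, the assumption there already gives `c₁ min P ≤ c₂`.
-/

open scoped RealInnerProductSpace
open Finset

theorem sum_range_le_of_le_sub {a b : ℕ → ℝ} {n : ℕ} (ha : 0 ≤ a n)
    (h : ∀ k < n, b k ≤ a k - a (k + 1)) : ∑ k ∈ range n, b k ≤ a 0 :=
  calc ∑ k ∈ range n, b k ≤ ∑ k ∈ range n, (a k - a (k + 1)) :=
        sum_le_sum fun k hk => h k (mem_range.1 hk)
    _ = a 0 - a n := sum_range_sub' a n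
    _ ≤ a 0 := sub_le_self _ ha

theorem le_add_of_sub_mul_le {m C B s R D : ℝ} (hC : 0 ≤ C) (hB : 0 ≤ B) (hD : 0 < D)
    (hs : D * m ≤ s) (h : (m - C) * s ≤ R) (hR : R ≤ D * B ^ 2) : m ≤ C + B := by
  rcases le_or_gt m C with hmC | hmC
  · linarith
  · have hsq : (m - C) ^ 2 * D ≤ B ^ 2 * D :=
      calc (m - C) ^ 2 * D ≤ (m - C) * (D * m) := by
            nlinarith [mul_nonneg (mul_nonneg (sub_pos.2 hmC).le hD.le) hC]
        _ ≤ (m - C) * s := mul_le_mul_of_nonneg_left hs (sub_pos.2 hmC).le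
        _ ≤ B ^ 2 * D := by linarith
    linarith [le_of_sq_le_sq (le_of_mul_le_mul_right hsq hD) hB]

section Projection

variable {E : Type*} [NormedAddCommGroup E] [InnerProductSpace ℝ E] {St : Set E} {proj : E → E}

theorem norm_sub_proj_sub_smul_sq_le
    (hproj : ∀ y, proj y ∈ St ∧ ∀ z ∈ St, ‖y - proj y‖ ≤ ‖y - z‖) (x g : E) (γ : ℝ) :
    ‖x - γ • g - proj (x - γ • g)‖ ^ 2 ≤
      ‖x - proj x‖ ^ 2 - 2 * γ * ⟪g, x - proj x⟫ + γ ^ 2 * ‖g‖ ^ 2 := by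
  calc ‖x - γ • g - proj (x - γ • g)‖ ^ 2 ≤ ‖(x - proj x) - γ • g‖ ^ 2 := by
        gcongr
        exact ((hproj _).2 _ (hproj x).1).trans_eq (by rw [sub_right_comm])
    _ = ‖x - proj x‖ ^ 2 - 2 * γ * ⟪g, x - proj x⟫ + γ ^ 2 * ‖g‖ ^ 2 := by
        rw [norm_sub_sq_real, real_inner_smul_right, norm_smul, Real.norm_eq_abs, mul_pow,
          sq_abs, real_inner_comm]
        ring

theorem mul_gain_le_sq_norm_sub_proj_sub
    (hproj : ∀ y, proj y ∈ St ∧ ∀ z ∈ St, ‖y - proj y‖ ≤ ‖y - z‖) {x g : E}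
    {γ c₁ c₂ α p b : ℝ} (hγ : 0 ≤ γ) (hass : c₁ * p - c₂ ≤ ⟪g, x - proj x⟫)
    (hγg : γ * ‖g‖ ^ 2 = (2 - α) * (c₁ * p + b)) :
    γ * (α * c₁ * p - 2 * c₂ - (2 - α) * b) ≤
      ‖x - proj x‖ ^ 2 - ‖x - γ • g - proj (x - γ • g)‖ ^ 2 := by
  have hstep := norm_sub_proj_sub_smul_sq_le hproj x g γ
  have hinner := mul_le_mul_of_nonneg_left hass hγ
  have hsq : γ ^ 2 * ‖g‖ ^ 2 = γ * ((2 - α) * (c₁ * p + b)) := by rw [← hγg]; ring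
  nlinarith

end Projection

section PolyakSteps

variable {E : Type*} [NormedAddCommGroup E] {x g : ℕ → E} {p β γ : ℕ → ℝ} {c₁ c₂ α G : ℝ} {K : ℕ}

/-- The neighborhood `Cᴷ` of the paper. -/
noncomputable def polyakNeighborhood (c₁ c₂ α : ℝ) (β γ : ℕ → ℝ) (K : ℕ) : ℝ :=
  (∑ k ∈ range (K + 1), (2 - α) * β k * γ k) / (α * c₁ * ∑ k ∈ range (K + 1), γ k)
    + 2 * c₂ / (α * c₁)

theorem div_le_polyakNeighborhood (hc₁ : 0 < c₁) (hα₁ : 0 < α) (hα₂ : α < 2)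
    (hβ : ∀ k, 0 < β k) (hγ : ∀ k ∈ range (K + 1), 0 ≤ γ k) :
    2 * c₂ / (α * c₁) ≤ polyakNeighborhood c₁ c₂ α β γ K := by
  have h2α : 0 < 2 - α := by linarith
  have hT : 0 ≤ ∑ k ∈ range (K + 1), (2 - α) * β k * γ k :=
    sum_nonneg fun k hk => mul_nonneg (mul_pos h2α (hβ k)).le (hγ k hk)
  have hΓ : 0 ≤ ∑ k ∈ range (K + 1), γ k := sum_nonneg hγ
  unfold polyakNeighborhood
  linarith [div_nonneg hT (by positivity : 0 ≤ α * c₁ * ∑ k ∈ range (K + 1), γ k)]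

theorem inf'_le_polyakNeighborhood (hc₁ : 0 < c₁) (hα₁ : 0 < α) (hα₂ : α < 2)
    (hp : ∀ k, 0 ≤ p k) (hβ : ∀ k, 0 < β k) (hγ : ∀ k ∈ range (K + 1), 0 ≤ γ k) {k : ℕ}
    (hk : k ∈ range (K + 1)) (hpk : c₁ * p k ≤ c₂) :
    (range (K + 1)).inf' nonempty_range_add_one p ≤ polyakNeighborhood c₁ c₂ α β γ K := by
  refine le_trans ?_ (div_le_polyakNeighborhood hc₁ hα₁ hα₂ hβ hγ)
  have hm := inf'_le p hk
  have hm0 : 0 ≤ (range (K + 1)).inf' nonempty_range_add_one p := le_inf' _ _ fun k _ => hp k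
  rw [le_div_iff₀ (by positivity)]
  nlinarith [mul_nonneg hm0 hc₁.le]

theorem card_mul_inf'_le_sum_mul_sq (hc₁ : 0 < c₁) (hα₂ : α < 2) (hβ : ∀ k, 0 < β k)
    (hγ : ∀ k ∈ range (K + 1), 0 ≤ γ k) (hG : ∀ k, ‖g k‖ ≤ G)
    (hγg : ∀ k ∈ range (K + 1), γ k * ‖g k‖ ^ 2 = (2 - α) * (c₁ * p k + β k)) :
    ((K : ℝ) + 1) * ((2 - α) * c₁ * (range (K + 1)).inf' nonempty_range_add_one p) ≤
      (∑ k ∈ range (K + 1), γ k) * G ^ 2 := by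
  have h2α : 0 < 2 - α := by linarith
  calc ((K : ℝ) + 1) * ((2 - α) * c₁ * (range (K + 1)).inf' nonempty_range_add_one p)
      = ∑ _k ∈ range (K + 1), (2 - α) * c₁ * (range (K + 1)).inf' nonempty_range_add_one p := by
        simp
    _ ≤ ∑ k ∈ range (K + 1), γ k * G ^ 2 := sum_le_sum fun k hk =>
        calc (2 - α) * c₁ * (range (K + 1)).inf' nonempty_range_add_one p
            ≤ (2 - α) * (c₁ * p k + β k) := by
              rw [mul_assoc]
              gcongr
              linarith [mul_le_mul_of_nonneg_left (inf'_le p hk) hc₁.le, hβ k]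
          _ = γ k * ‖g k‖ ^ 2 := (hγg k hk).symm
          _ ≤ γ k * G ^ 2 := by gcongr; exacts [hγ k hk, hG k]
    _ = (∑ k ∈ range (K + 1), γ k) * G ^ 2 := (sum_mul ..).symm

variable [InnerProductSpace ℝ E] {St : Set E} {proj : E → E}

theorem inf'_sub_polyakNeighborhood_mul_le
    (hproj : ∀ y, proj y ∈ St ∧ ∀ z ∈ St, ‖y - proj y‖ ≤ ‖y - z‖)
    (hc₁ : 0 < c₁) (hα₁ : 0 < α) (hγ : ∀ k ∈ range (K + 1), 0 < γ k)
    (hass : ∀ k, c₁ * p k - c₂ ≤ ⟪g k, x k - proj (x k)⟫)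
    (hupd : ∀ k, x (k + 1) = x k - γ k • g k)
    (hγg : ∀ k ∈ range (K + 1), γ k * ‖g k‖ ^ 2 = (2 - α) * (c₁ * p k + β k)) :
    ((range (K + 1)).inf' nonempty_range_add_one p - polyakNeighborhood c₁ c₂ α β γ K)
      * (α * c₁ * ∑ k ∈ range (K + 1), γ k) ≤ ‖x 0 - proj (x 0)‖ ^ 2 := by
  set m := (range (K + 1)).inf' nonempty_range_add_one p
  have hΓ : 0 < ∑ k ∈ range (K + 1), γ k := sum_pos hγ nonempty_range_add_one
  have hmΓ : m * ∑ k ∈ range (K + 1), γ k ≤ ∑ k ∈ range (K + 1), γ k * p k := by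
    rw [mul_sum]
    exact sum_le_sum fun k hk => by
      rw [mul_comm]; exact mul_le_mul_of_nonneg_left (inf'_le p hk) (hγ k hk).le
  calc (m - polyakNeighborhood c₁ c₂ α β γ K) * (α * c₁ * ∑ k ∈ range (K + 1), γ k)
      = α * c₁ * (m * ∑ k ∈ range (K + 1), γ k) - 2 * c₂ * ∑ k ∈ range (K + 1), γ k
          - ∑ k ∈ range (K + 1), (2 - α) * β k * γ k := by
        unfold polyakNeighborhood; field_simp; ring
    _ ≤ α * c₁ * ∑ k ∈ range (K + 1), γ k * p k - 2 * c₂ * ∑ k ∈ range (K + 1), γ k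
          - ∑ k ∈ range (K + 1), (2 - α) * β k * γ k := by gcongr
    _ = ∑ k ∈ range (K + 1), γ k * (α * c₁ * p k - 2 * c₂ - (2 - α) * β k) := by
        simp only [mul_sum, ← sum_sub_distrib]
        exact sum_congr rfl fun k _ => by ring
    _ ≤ ‖x 0 - proj (x 0)‖ ^ 2 :=
        sum_range_le_of_le_sub (a := fun k => ‖x k - proj (x k)‖ ^ 2) (sq_nonneg _)
          fun k hk => by
          rw [hupd k]
          exact mul_gain_le_sq_norm_sub_proj_sub hproj (hγ k (mem_range.2 hk)).le (hass k)
            (hγg k (mem_range.2 hk))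

theorem inf'_le_add_polyakNeighborhood
    (hproj : ∀ y, proj y ∈ St ∧ ∀ z ∈ St, ‖y - proj y‖ ≤ ‖y - z‖)
    (hc₁ : 0 < c₁) (hc₂ : 0 ≤ c₂) (hα₁ : 0 < α) (hα₂ : α < 2) (hp : ∀ k, 0 ≤ p k)
    (hβ : ∀ k, 0 < β k) (hass : ∀ k, c₁ * p k - c₂ ≤ ⟪g k, x k - proj (x k)⟫)
    (hG : ∀ k, ‖g k‖ ≤ G) (hupd : ∀ k, x (k + 1) = x k - γ k • g k)
    (hγg : ∀ k ∈ range (K + 1), γ k * ‖g k‖ ^ 2 = (2 - α) * (c₁ * p k + β k)) :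
    (range (K + 1)).inf' nonempty_range_add_one p ≤
      G * ‖x 0 - proj (x 0)‖ / (√((2 - α) * α) * c₁ * √(K + 1))
        + polyakNeighborhood c₁ c₂ α β γ K := by
  have h2α : 0 < 2 - α := by linarith
  have hγ : ∀ k ∈ range (K + 1), 0 < γ k := fun k hk =>
    pos_of_mul_pos_left ((hγg k hk).symm ▸
      mul_pos h2α (add_pos_of_nonneg_of_pos (mul_nonneg hc₁.le (hp k)) (hβ k))) (sq_nonneg _)
  have hG0 : 0 ≤ G := (norm_nonneg _).trans (hG 0)
  set r := ‖x 0 - proj (x 0)‖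
  set Γ := ∑ k ∈ range (K + 1), γ k
  rw [add_comm (G * r / _)]
  refine le_add_of_sub_mul_le (s := α * c₁ * Γ * G ^ 2) (R := r ^ 2 * G ^ 2)
    (D := α * (2 - α) * c₁ ^ 2 * (K + 1))
    (le_trans (by positivity)
      (div_le_polyakNeighborhood hc₁ hα₁ hα₂ hβ fun k hk => (hγ k hk).le))
    (by positivity) (by have := mul_pos hα₁ h2α; positivity) ?_ ?_ ?_
  · have hcard := card_mul_inf'_le_sum_mul_sq hc₁ hα₂ hβ (fun k hk => (hγ k hk).le) hG hγg
    have := mul_le_mul_of_nonneg_left hcard (mul_pos hα₁ hc₁).le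
    linarith
  · rw [← mul_assoc]
    gcongr
    exact inf'_sub_polyakNeighborhood_mul_le hproj hc₁ hα₁ hγ hass hupd hγg
  · refine le_of_eq ?_
    rw [div_pow, mul_pow, mul_pow, mul_pow, Real.sq_sqrt (mul_pos h2α hα₁).le,
      Real.sq_sqrt (by positivity)]
    field_simp

end PolyakSteps

theorem bounded_gradient_rate_general
    {d : ℕ} (f : EuclideanSpace ℝ (Fin d) → ℝ)
    (St : Set (EuclideanSpace ℝ (Fin d)))
    (proj : EuclideanSpace ℝ (Fin d) → EuclideanSpace ℝ (Fin d))
    (hproj : ∀ y, proj y ∈ St ∧ ∀ z ∈ St, ‖y - proj y‖ ≤ ‖y - z‖)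
    (P : EuclideanSpace ℝ (Fin d) → ℝ) (hP : ∀ y, 0 ≤ P y)
    (c₁ c₂ : ℝ) (hc₁ : 0 < c₁) (hc₂ : 0 ≤ c₂)
    (hass : ∀ y, c₁ * P y - c₂ ≤ ⟪gradient f y, y - proj y⟫)
    (G : ℝ) (hG : ∀ y, ‖gradient f y‖ ≤ G)
    (α : ℝ) (hα₁ : 0 < α) (hα₂ : α < 2)
    (β : ℕ → ℝ) (hβ : ∀ k, 0 < β k)
    (x : ℕ → EuclideanSpace ℝ (Fin d)) (γ : ℕ → ℝ)
    (hupd : ∀ k, x (k + 1) = x k - γ k • gradient f (x k))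
    (hγ : ∀ k, γ k = (2 - α) * (c₁ * P (x k) + β k) / ‖gradient f (x k)‖ ^ 2)
    (K : ℕ) :
    (Finset.range (K + 1)).inf' Finset.nonempty_range_add_one (fun k => P (x k)) ≤
      G * ‖x 0 - proj (x 0)‖ / (Real.sqrt ((2 - α) * α) * c₁ * Real.sqrt (K + 1))
      + ((∑ k ∈ Finset.range (K + 1), (2 - α) * β k * γ k) /
          (α * c₁ * ∑ k ∈ Finset.range (K + 1), γ k)
        + 2 * c₂ / (α * c₁)) := by
  by_cases hstat : ∃ k ∈ range (K + 1), gradient f (x k) = 0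
  · obtain ⟨k, hk, hk0⟩ := hstat
    have hPk : c₁ * P (x k) ≤ c₂ := by simpa [hk0] using hass (x k)
    have hγ0 : ∀ k, 0 ≤ γ k := fun k => by
      rw [hγ k]
      have := hP (x k)
      have := hβ k
      have := sub_pos.2 hα₂
      positivity
    have hB : 0 ≤ G * ‖x 0 - proj (x 0)‖ / (√((2 - α) * α) * c₁ * √(K + 1)) := by
      have := (norm_nonneg _).trans (hG (x 0))
      positivity
    exact le_add_of_nonneg_of_le hB
      (inf'_le_polyakNeighborhood hc₁ hα₁ hα₂ (fun k => hP (x k)) hβ (fun k _ => hγ0 k) hk hPk)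
  · push Not at hstat
    exact inf'_le_add_polyakNeighborhood hproj hc₁ hc₂ hα₁ hα₂ (fun k => hP (x k)) hβ
      (fun k => hass (x k)) (fun k => hG (x k)) hupd fun k hk => by
        rw [hγ k, div_mul_cancel₀ _ (by simpa using hstat k hk)]

/-- Corollary 2: under the unified parametric assumption and bounded gradients,
gradient descent with the stepsize `γᵏ = (2−α)(c₁ P(xᵏ) + βᵏ)/‖∇f(xᵏ)‖²` achieves an
`O(1/√K)` rate for the progress function up to the neighborhood `Cᴷ`. -/
theorem bounded_gradient_rate
    {d : ℕ} (f : EuclideanSpace ℝ (Fin d) → ℝ)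
    (hf : ContDiff ℝ 1 f)
    (S St : Set (EuclideanSpace ℝ (Fin d)))
    (hSne : S.Nonempty)
    (hSmin : ∀ s ∈ S, ∀ y, f s ≤ f y)
    (hStS : St ⊆ S) (hStne : St.Nonempty)
    (proj : EuclideanSpace ℝ (Fin d) → EuclideanSpace ℝ (Fin d))
    (hproj : ∀ y, proj y ∈ St ∧ ∀ z ∈ St, ‖y - proj y‖ ≤ ‖y - z‖)
    (P : EuclideanSpace ℝ (Fin d) → ℝ) (hP : ∀ y, 0 ≤ P y)
    (c₁ c₂ : ℝ) (hc₁ : 0 < c₁) (hc₂ : 0 ≤ c₂)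
    (hass : ∀ y, c₁ * P y - c₂ ≤ ⟪gradient f y, y - proj y⟫)
    (G : ℝ) (hG : ∀ y, ‖gradient f y‖ ≤ G)
    (α : ℝ) (hα₁ : 0 < α) (hα₂ : α < 2)
    (β : ℕ → ℝ) (hβ : ∀ k, 0 < β k)
    (x : ℕ → EuclideanSpace ℝ (Fin d)) (γ : ℕ → ℝ)
    (hupd : ∀ k, x (k + 1) = x k - γ k • gradient f (x k))
    (hγ : ∀ k, γ k = (2 - α) * (c₁ * P (x k) + β k) / ‖gradient f (x k)‖ ^ 2)
    (K : ℕ) :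
    (Finset.range (K + 1)).inf' Finset.nonempty_range_add_one (fun k => P (x k)) ≤
      G * ‖x 0 - proj (x 0)‖ / (Real.sqrt ((2 - α) * α) * c₁ * Real.sqrt (K + 1))
      + ((∑ k ∈ Finset.range (K + 1), (2 - α) * β k * γ k) /
          (α * c₁ * ∑ k ∈ Finset.range (K + 1), γ k)
        + 2 * c₂ / (α * c₁)) :=
  bounded_gradient_rate_general f St proj hproj P hP c₁ c₂ hc₁ hc₂ hass G hG α hα₁ hα₂ β hβ x γ hupd
    hγ K
end

section
/- Let f : ℝ^d → ℝ be continuously differentiable with a nonempty set S of global minimizers, ∅ ≠ S̃ ⊆ S, P(·; S̃) nonnegative, and suppose there exist c₁ > 0, c₂ ≥ 0 with ⟨∇f(x), x − proj_{S̃}(x)⟩ ≥ c₁ P(x; S̃) − c₂ for all x. Let (x^k) be iterates x^{k+1} = x^k − γ^k ∇f(x^k) with stepsizes satisfying 0 < γ^k ≤ (2−α)(⟨∇f(x^k), x^k − x^k_p⟩ + c₂ + β^k)/‖∇f(x^k)‖² for all k (0 < α < 2, β^k > 0, x^k_p := proj_{S̃}(x^k)), and additionally γ^k ≤ γ^{k−1}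 for k = 1, …, K. Then min_{0≤k≤K} P(x^k; S̃) ≤ D²_max/(α c₁ γ^K (K+1)) + (2−α)/(α c₁ (K+1)) Σ_{k=0}^{K} β^k + 2c₂/(α c₁), where D²_max := max_{0≤k≤K} ‖x^k − x^k_p‖². -/
/-!
Write `D k = ‖x k - proj (x k)‖²`. Expanding the square and using that `proj (x (k + 1))` is at
least as close to `x (k + 1)` as `proj (x k)`, the stepsize bound gives the descent inequality
`α c₁ P (x k) ≤ (D k - D (k + 1)) / γ k + (2 - α) β k + 2 c₂`. Summing over `k ≤ K`, the weighted
telescoping sum is at most `max D / γ K` because the weights `1 / γ k` increase (Abel summation),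
and the minimum of `P (x k)` is at most their average.
-/

open scoped RealInnerProductSpace

open Finset

section Descent

variable {E : Type*} [NormedAddCommGroup E] [InnerProductSpace ℝ E]

lemma norm_sub_smul_sub_sq (x p g : E) (γ : ℝ) :
    ‖x - γ • g - p‖ ^ 2 = ‖x - p‖ ^ 2 - 2 * γ * ⟪g, x - p⟫ + γ ^ 2 * ‖g‖ ^ 2 := by
  rw [sub_right_comm, norm_sub_sq_real, real_inner_smul_right, norm_smul, real_inner_comm,
    mul_pow, Real.norm_eq_abs, sq_abs]
  ring

lemma mul_le_of_le_div_of_pos {γ a b : ℝ} (hγ : 0 < γ) (hb : 0 ≤ b) (h : γ ≤ a / b) :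
    γ * b ≤ a := by
  -- `a / 0 = 0`, so `b = 0` would force `γ ≤ 0`.
  rcases hb.eq_or_lt with rfl | hb
  · rw [div_zero] at h
    linarith
  · exact (le_div_iff₀ hb).1 h

lemma sub_le_div_of_gradient_step {x p p' g : E} {γ α c β : ℝ} (hγ : 0 < γ)
    (hstep : γ * ‖g‖ ^ 2 ≤ (2 - α) * (⟪g, x - p⟫ + c + β))
    (hp' : ‖x - γ • g - p'‖ ≤ ‖x - γ • g - p‖) :
    α * ⟪g, x - p⟫ - (2 - α) * (c + β) ≤ (‖x - p‖ ^ 2 - ‖x - γ • g - p'‖ ^ 2) / γ := by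
  rw [le_div_iff₀ hγ]
  have hsq := pow_le_pow_left₀ (norm_nonneg _) hp' 2
  rw [norm_sub_smul_sub_sq x p g γ] at hsq
  linarith [mul_le_mul_of_nonneg_left hstep hγ.le]

end Descent

-- Abel summation: as `m - D (k + 1) ≥ 0`, replacing `γ k` by the smaller `γ (k + 1)` in the
-- partial sums only increases them.
lemma sum_range_sub_div_le {γ D : ℕ → ℝ} {m : ℝ} {K : ℕ} (hγ : ∀ k ≤ K, 0 < γ k)
    (hmono : ∀ k < K, γ (k + 1) ≤ γ k) (hm : ∀ k ≤ K, D k ≤ m) :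
    ∑ k ∈ range (K + 1), (D k - D (k + 1)) / γ k ≤ (m - D (K + 1)) / γ K := by
  induction K with
  | zero =>
    rw [sum_range_one]
    gcongr
    exacts [(hγ 0 le_rfl).le, hm 0 le_rfl]
  | succ n ih =>
    have hprev := ih (fun k hk => hγ k (by omega)) (fun k hk => hmono k (by omega))
      (fun k hk => hm k (by omega))
    have hweight : (m - D (n + 1)) / γ n ≤ (m - D (n + 1)) / γ (n + 1) :=
      div_le_div_of_nonneg_left (by linarith [hm (n + 1) le_rfl]) (hγ (n + 1) le_rfl)
        (hmono n (by omega))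
    rw [sum_range_succ]
    calc _ ≤ (m - D (n + 1)) / γ (n + 1) + (D (n + 1) - D (n + 2)) / γ (n + 1) := by
          linarith
      _ = (m - D (n + 2)) / γ (n + 1) := by ring

lemma inf'_range_le_of_mul_le_sub_div {P b D γ : ℕ → ℝ} {c : ℝ} {K : ℕ} (hc : 0 < c)
    (hγ : ∀ k ≤ K, 0 < γ k) (hmono : ∀ k < K, γ (k + 1) ≤ γ k) (hD : ∀ k, 0 ≤ D k)
    (hstep : ∀ k ≤ K, c * P k ≤ (D k - D (k + 1)) / γ k + b k) :
    (range (K + 1)).inf' nonempty_range_add_one P ≤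
      ((range (K + 1)).sup' nonempty_range_add_one D / γ K + ∑ k ∈ range (K + 1), b k) /
        (c * (K + 1)) := by
  set m := (range (K + 1)).sup' nonempty_range_add_one D
  set M := (range (K + 1)).inf' nonempty_range_add_one P
  have hinf : (K + 1 : ℝ) * M ≤ ∑ k ∈ range (K + 1), P k := by
    have := card_nsmul_le_sum (range (K + 1)) P M fun k hk => inf'_le P hk
    rwa [card_range, nsmul_eq_mul, Nat.cast_add_one] at this
  have htel : ∑ k ∈ range (K + 1), (D k - D (k + 1)) / γ k ≤ m / γ K := by
    refine (sum_range_sub_div_le (m := m) hγ hmono fun k hk => ?_).trans ?_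
    · exact le_sup' D (mem_range.2 (Nat.lt_succ_of_le hk))
    · gcongr
      exacts [(hγ K le_rfl).le, sub_le_self _ (hD _)]
  rw [le_div_iff₀ (by positivity)]
  calc M * (c * (K + 1)) = c * ((K + 1 : ℝ) * M) := by ring
    _ ≤ ∑ k ∈ range (K + 1), c * P k := by
      rw [← mul_sum]
      exact mul_le_mul_of_nonneg_left hinf hc.le
    _ ≤ ∑ k ∈ range (K + 1), ((D k - D (k + 1)) / γ k + b k) :=
      sum_le_sum fun k hk => hstep k (Nat.lt_succ_iff.1 (mem_range.1 hk))
    _ ≤ m / γ K + ∑ k ∈ range (K + 1), b k := by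
      rw [sum_add_distrib]
      linarith

theorem decreasing_stepsize_rate_general
    {d : ℕ} (f : EuclideanSpace ℝ (Fin d) → ℝ)
    (St : Set (EuclideanSpace ℝ (Fin d)))
    (proj : EuclideanSpace ℝ (Fin d) → EuclideanSpace ℝ (Fin d))
    (hproj : ∀ y, proj y ∈ St ∧ ∀ z ∈ St, ‖y - proj y‖ ≤ ‖y - z‖)
    (P : EuclideanSpace ℝ (Fin d) → ℝ)
    (c₁ c₂ : ℝ) (hc₁ : 0 < c₁)
    (hass : ∀ y, c₁ * P y - c₂ ≤ ⟪gradient f y, y - proj y⟫)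
    (α : ℝ) (hα₁ : 0 < α)
    (β : ℕ → ℝ)
    (x : ℕ → EuclideanSpace ℝ (Fin d)) (γ : ℕ → ℝ)
    (hupd : ∀ k, x (k + 1) = x k - γ k • gradient f (x k))
    (hγ : ∀ k, 0 < γ k ∧
      γ k ≤ (2 - α) * (⟪gradient f (x k), x k - proj (x k)⟫ + c₂ + β k) /
        ‖gradient f (x k)‖ ^ 2)
    (K : ℕ)
    (hmono : ∀ k, 1 ≤ k → k ≤ K → γ k ≤ γ (k - 1)) :
    (Finset.range (K + 1)).inf' Finset.nonempty_range_add_one (fun k => P (x k)) ≤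
      ((Finset.range (K + 1)).sup' Finset.nonempty_range_add_one
          (fun k => ‖x k - proj (x k)‖ ^ 2)) / (α * c₁ * γ K * (K + 1))
      + (2 - α) / (α * c₁ * (K + 1)) * ∑ k ∈ Finset.range (K + 1), β k
      + 2 * c₂ / (α * c₁) := by
  set D : ℕ → ℝ := fun k => ‖x k - proj (x k)‖ ^ 2
  have hdescent (k : ℕ) :
      α * c₁ * P (x k) ≤ (D k - D (k + 1)) / γ k + ((2 - α) * β k + 2 * c₂) := by
    have hstep := mul_le_of_le_div_of_pos (hγ k).1 (sq_nonneg _) (hγ k).2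
    have hnext : ‖x (k + 1) - proj (x (k + 1))‖ ≤ ‖x (k + 1) - proj (x k)‖ :=
      (hproj _).2 _ (hproj _).1
    rw [hupd k] at hnext
    have hgain := sub_le_div_of_gradient_step (hγ k).1 hstep hnext
    rw [← hupd k] at hgain
    linarith [mul_le_mul_of_nonneg_left (hass (x k)) hα₁.le]
  calc _ ≤ _ := inf'_range_le_of_mul_le_sub_div (mul_pos hα₁ hc₁) (fun k _ => (hγ k).1)
        (fun k hk => by simpa using hmono (k + 1) (by omega) hk) (fun k => sq_nonneg _)
        (fun k _ => hdescent k)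
    _ = _ := by
      rw [sum_add_distrib, ← mul_sum, sum_const, card_range, nsmul_eq_mul]
      have hγK : γ K ≠ 0 := (hγ K).1.ne'
      field_simp
      push_cast
      ring

/-- Corollary 3: under the unified parametric assumption, gradient descent with
non-increasing stepsizes (up to iteration `K`) satisfies the stated bound on the
minimum of the progress function. -/
theorem decreasing_stepsize_rate
    {d : ℕ} (f : EuclideanSpace ℝ (Fin d) → ℝ)
    (hf : ContDiff ℝ 1 f)
    (S St : Set (EuclideanSpace ℝ (Fin d)))
    (hSne : S.Nonempty)
    (hSmin : ∀ s ∈ S, ∀ y, f s ≤ f y)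
    (hStS : St ⊆ S) (hStne : St.Nonempty)
    (proj : EuclideanSpace ℝ (Fin d) → EuclideanSpace ℝ (Fin d))
    (hproj : ∀ y, proj y ∈ St ∧ ∀ z ∈ St, ‖y - proj y‖ ≤ ‖y - z‖)
    (P : EuclideanSpace ℝ (Fin d) → ℝ) (hP : ∀ y, 0 ≤ P y)
    (c₁ c₂ : ℝ) (hc₁ : 0 < c₁) (hc₂ : 0 ≤ c₂)
    (hass : ∀ y, c₁ * P y - c₂ ≤ ⟪gradient f y, y - proj y⟫)
    (α : ℝ) (hα₁ : 0 < α) (hα₂ : α < 2)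
    (β : ℕ → ℝ) (hβ : ∀ k, 0 < β k)
    (x : ℕ → EuclideanSpace ℝ (Fin d)) (γ : ℕ → ℝ)
    (hupd : ∀ k, x (k + 1) = x k - γ k • gradient f (x k))
    (hγ : ∀ k, 0 < γ k ∧
      γ k ≤ (2 - α) * (⟪gradient f (x k), x k - proj (x k)⟫ + c₂ + β k) /
        ‖gradient f (x k)‖ ^ 2)
    (K : ℕ)
    (hmono : ∀ k, 1 ≤ k → k ≤ K → γ k ≤ γ (k - 1)) :
    (Finset.range (K + 1)).inf' Finset.nonempty_range_add_one (fun k => P (x k)) ≤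
      ((Finset.range (K + 1)).sup' Finset.nonempty_range_add_one
          (fun k => ‖x k - proj (x k)‖ ^ 2)) / (α * c₁ * γ K * (K + 1))
      + (2 - α) / (α * c₁ * (K + 1)) * ∑ k ∈ Finset.range (K + 1), β k
      + 2 * c₂ / (α * c₁) :=
  decreasing_stepsize_rate_general f St proj hproj P c₁ c₂ hc₁ hass α hα₁ β x γ hupd hγ K hmono
end

section
/- Let f : ℝ^d → ℝ be continuously differentiable with a nonempty set S of global minimizers, ∅ ≠ S̃ ⊆ S, and suppose there exist L > 0, c₁ > 0, c₂ ≥ 0 with ⟨∇f(x), x − proj_{S̃}(x)⟩ ≥ (c₁/L)‖∇f(x)‖² − c₂ for all x ∈ ℝ^d. Let x^{k+1} = x^k − γ^k ∇f(x^k) with the constant stepsize γ^k = c₁/L. Then for every K ≥ 0, min_{0≤k≤K} ‖∇f(x^k)‖² ≤ L² ‖x^0 − x^0_p‖²/(c₁² (K+1)) + 2c₂ L/c₁, where x^0_p := proj_{S̃}(x^0). -/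
open scoped RealInnerProductSpace

/-- Example 3: under the unified parametric assumption with progress function
`P(x) = (1/L)‖∇f(x)‖²` and constant stepsize `c₁/L`, gradient descent achieves
an `O(1/K)` rate for the minimum squared gradient norm up to `2c₂L/c₁`. -/
theorem gradient_norm_rate_constant_stepsize
    {d : ℕ} (f : EuclideanSpace ℝ (Fin d) → ℝ)
    (hf : ContDiff ℝ 1 f)
    (S St : Set (EuclideanSpace ℝ (Fin d)))
    (hSne : S.Nonempty)
    (hSmin : ∀ s ∈ S, ∀ y, f s ≤ f y)
    (hStS : St ⊆ S) (hStne : St.Nonempty)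
    (proj : EuclideanSpace ℝ (Fin d) → EuclideanSpace ℝ (Fin d))
    (hproj : ∀ y, proj y ∈ St ∧ ∀ z ∈ St, ‖y - proj y‖ ≤ ‖y - z‖)
    (L c₁ c₂ : ℝ) (hL : 0 < L) (hc₁ : 0 < c₁) (hc₂ : 0 ≤ c₂)
    (hass : ∀ y, c₁ / L * ‖gradient f y‖ ^ 2 - c₂ ≤ ⟪gradient f y, y - proj y⟫)
    (x : ℕ → EuclideanSpace ℝ (Fin d)) (γ : ℕ → ℝ)
    (hupd : ∀ k, x (k + 1) = x k - γ k • gradient f (x k))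
    (hγ : ∀ k, γ k = c₁ / L)
    (K : ℕ) :
    (Finset.range (K + 1)).inf' Finset.nonempty_range_add_one
        (fun k => ‖gradient f (x k)‖ ^ 2) ≤
      L ^ 2 * ‖x 0 - proj (x 0)‖ ^ 2 / (c₁ ^ 2 * (K + 1)) + 2 * c₂ * L / c₁ := by
  set γ₀ : ℝ := c₁ / L with hγ₀
  have hγ₀pos : 0 < γ₀ := div_pos hc₁ hL
  set G : ℕ → ℝ := fun k => ‖gradient f (x k)‖ ^ 2 with hG
  set D : ℕ → ℝ := fun k => ‖x k - proj (x k)‖ ^ 2 with hD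
  -- key one-step inequality
  have key : ∀ k, γ₀ ^ 2 * G k ≤ D k - D (k + 1) + 2 * γ₀ * c₂ := by
    intro k
    have hp := (hproj (x k)).1
    have hle : ‖x (k + 1) - proj (x (k + 1))‖ ≤ ‖x (k + 1) - proj (x k)‖ :=
      (hproj (x (k + 1))).2 _ hp
    have hle2 : D (k + 1) ≤ ‖x (k + 1) - proj (x k)‖ ^ 2 := by
      have := pow_le_pow_left₀ (norm_nonneg _) hle 2
      simpa [hD] using this
    have hexp : ‖x (k + 1) - proj (x k)‖ ^ 2
        = D k - 2 * γ₀ * ⟪gradient f (x k), x k - proj (x k)⟫ + γ₀ ^ 2 * G k := by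
      have h1 : x (k + 1) - proj (x k) = (x k - proj (x k)) - γ₀ • gradient f (x k) := by
        rw [hupd k, hγ k]
        abel
      rw [h1, norm_sub_sq_real]
      rw [real_inner_smul_right, norm_smul, real_inner_comm]
      simp [hD, hG, mul_pow, abs_of_pos hγ₀pos]
      ring
    have hass' := hass (x k)
    have h2 := mul_le_mul_of_nonneg_left hass' (by positivity : (0:ℝ) ≤ 2 * γ₀)
    have hGk : G k = ‖gradient f (x k)‖ ^ 2 := rfl
    nlinarith [hle2, hexp, hGk]
  -- telescoping sum
  have hsum : ∀ N : ℕ, ∑ k ∈ Finset.range N, γ₀ ^ 2 * G k ≤ D 0 - D N + N * (2 * γ₀ * c₂) := by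
    intro N
    induction N with
    | zero => simp
    | succ n ih =>
      rw [Finset.sum_range_succ]
      have := key n
      push_cast
      linarith
  set m : ℝ := (Finset.range (K + 1)).inf' Finset.nonempty_range_add_one G with hm
  have hmle : ∀ k ∈ Finset.range (K + 1), m ≤ G k := fun k hk => Finset.inf'_le _ hk
  have hmsum : (K + 1 : ℝ) * (γ₀ ^ 2 * m) ≤ ∑ k ∈ Finset.range (K + 1), γ₀ ^ 2 * G k := by
    have : ∑ k ∈ Finset.range (K + 1), γ₀ ^ 2 * m ≤ ∑ k ∈ Finset.range (K + 1), γ₀ ^ 2 * G k := by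
      apply Finset.sum_le_sum
      intro k hk
      exact mul_le_mul_of_nonneg_left (hmle k hk) (by positivity)
    simpa [Finset.sum_const, mul_comm] using this
  have hfinal : (K + 1 : ℝ) * (γ₀ ^ 2 * m) ≤ D 0 + (K + 1) * (2 * γ₀ * c₂) := by
    have h := hsum (K + 1)
    have hDK : 0 ≤ D (K + 1) := by positivity
    push_cast at h
    linarith [hmsum]
  -- conclude by dividing
  have hK1 : (0 : ℝ) < (K : ℝ) + 1 := by positivity
  have hD0 : 0 ≤ D 0 := by positivity
  rw [div_add' _ _ _ (by positivity), le_div_iff₀ (by positivity)]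
  have hγ₀' : γ₀ * L = c₁ := by rw [hγ₀]; field_simp
  show m * (c₁ ^ 2 * ((K : ℝ) + 1)) ≤ L ^ 2 * D 0 + 2 * c₂ * L / c₁ * (c₁ ^ 2 * ((K : ℝ) + 1))
  have h2 : 2 * c₂ * L / c₁ * (c₁ ^ 2 * ((K : ℝ) + 1)) = 2 * c₂ * L * c₁ * ((K : ℝ) + 1) := by
    field_simp
  rw [h2]
  have hfl : L ^ 2 * ((K + 1 : ℝ) * (γ₀ ^ 2 * m)) ≤ L ^ 2 * (D 0 + (K + 1) * (2 * γ₀ * c₂)) :=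
    mul_le_mul_of_nonneg_left hfinal (sq_nonneg L)
  have e3 : L ^ 2 * ((K + 1 : ℝ) * (γ₀ ^ 2 * m)) = m * (c₁ ^ 2 * ((K : ℝ) + 1)) := by
    rw [← hγ₀']; ring
  have e4 : L ^ 2 * (D 0 + ((K : ℝ) + 1) * (2 * γ₀ * c₂))
      = L ^ 2 * D 0 + 2 * c₂ * L * c₁ * ((K : ℝ) + 1) := by
    rw [← hγ₀']; ring
  linarith
end

section
/- Let f : ℝ^d → ℝ be continuously differentiable with a nonempty set S of global minimizers, minimal value f⋆, ∅ ≠ S̃ ⊆ S, and suppose there exist L > 0, c₁ > 0, c₂ ≥ 0 such that ⟨∇f(x), x − proj_{S̃}(x)⟩ ≥ c₁ (f(x) − f⋆ + (1/(2L))‖∇f(x)‖²) − c₂ for all x ∈ ℝ^d. Let x^{k+1} = x^k − γ^k ∇f(x^k) with γ^k = c₁ (f(x^k) − f⋆)/‖∇f(x^k)‖² + c₁/(2L). Then for every K ≥ 0: min_{0≤k≤K} (f(x^k) − f⋆ + (1/(2L))‖∇f(x^k)‖²) ≤ 2L ‖x^0 − x^0_p‖²/(c₁² (K+1)) + 2c₂/c₁,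 where x^0_p := proj_{S̃}(x^0). -/
open scoped RealInnerProductSpace

/-!
Let `Dₖ = ‖xᵏ − proj xᵏ‖²`. Since `proj xᵏ⁺¹` is at least as close to `xᵏ⁺¹` as `proj xᵏ`,
expanding the square and using the assumption on `Pₖ = P(xᵏ)` gives
`Dₖ₊₁ ≤ Dₖ − 2γᵏ(c₁Pₖ − c₂) + (γᵏ)²‖∇f(xᵏ)‖²`; the stepsize satisfies `γᵏ‖∇f(xᵏ)‖² = c₁Pₖ` and
`γᵏ ≥ c₁/(2L)`, so `Dₖ₊₁ ≤ Dₖ − (c₁/(2L))(c₁Pₖ − 2c₂)` whenever `c₁Pₖ ≥ 2c₂`. If the minimum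
`m` of the `Pₖ` satisfies `c₁m ≤ 2c₂` there is nothing to prove; otherwise every step decreases
`D` by at least `(c₁/(2L))(c₁m − 2c₂)`, and `D ≥ 0` bounds the number of such steps.
-/

theorem mul_le_of_forall_lt_succ_le_sub {D : ℕ → ℝ} {a : ℝ} {n : ℕ}
    (hstep : ∀ k < n, D (k + 1) ≤ D k - a) (hD : 0 ≤ D n) : n * a ≤ D 0 := by
  suffices ∀ j ≤ n, D j ≤ D 0 - j * a by linarith [this n le_rfl]
  intro j hj
  induction j with
  | zero => simp
  | succ j ih =>
    push_cast
    linarith [hstep j hj, ih (Nat.le_of_succ_le hj)]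

theorem norm_sub_stepsize_smul_sub_sq_le {E : Type*} [NormedAddCommGroup E]
    [InnerProductSpace ℝ E] {x p g : E} {δ L c₁ c₂ : ℝ} (hδ : 0 ≤ δ) (hL : 0 < L) (hc₁ : 0 < c₁)
    (hass : c₁ * (δ + 1 / (2 * L) * ‖g‖ ^ 2) - c₂ ≤ ⟪g, x - p⟫)
    (hprogress : 2 * c₂ ≤ c₁ * (δ + 1 / (2 * L) * ‖g‖ ^ 2)) :
    ‖x - (c₁ * δ / ‖g‖ ^ 2 + c₁ / (2 * L)) • g - p‖ ^ 2 ≤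
      ‖x - p‖ ^ 2 - c₁ / (2 * L) * (c₁ * (δ + 1 / (2 * L) * ‖g‖ ^ 2) - 2 * c₂) := by
  rcases eq_or_ne g 0 with rfl | hg
  -- the step is trivial, and the assumption forces `c₁δ ≤ c₂`
  · simp only [inner_zero_left, norm_zero, smul_zero, sub_zero] at hass ⊢
    have hδc₂ : c₁ * δ - 2 * c₂ ≤ 0 := by linarith [mul_nonneg hc₁.le hδ]
    have : 0 ≤ c₁ / (2 * L) := by positivity
    nlinarith
  set P := δ + 1 / (2 * L) * ‖g‖ ^ 2
  set γ := c₁ * δ / ‖g‖ ^ 2 + c₁ / (2 * L)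
  have hg2 : 0 < ‖g‖ ^ 2 := by positivity
  have hγg : γ * ‖g‖ ^ 2 = c₁ * P := by
    simp only [γ, P]
    field_simp
  have hγ : c₁ / (2 * L) ≤ γ := le_add_of_nonneg_left (by positivity)
  have hγ₀ : 0 ≤ γ := le_trans (by positivity) hγ
  calc ‖x - γ • g - p‖ ^ 2
      = ‖x - p‖ ^ 2 - 2 * γ * ⟪g, x - p⟫ + γ * (γ * ‖g‖ ^ 2) := by
        rw [sub_right_comm, norm_sub_sq_real, real_inner_smul_right, real_inner_comm, norm_smul,
          Real.norm_of_nonneg hγ₀]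
        ring
    _ ≤ ‖x - p‖ ^ 2 - 2 * γ * (c₁ * P - c₂) + γ * (c₁ * P) := by
        rw [hγg]
        gcongr
    _ = ‖x - p‖ ^ 2 - γ * (c₁ * P - 2 * c₂) := by ring
    _ ≤ ‖x - p‖ ^ 2 - c₁ / (2 * L) * (c₁ * P - 2 * c₂) := by gcongr

theorem progress_with_gradient_term_rate_general
    {d : ℕ} (f : EuclideanSpace ℝ (Fin d) → ℝ)
    (S St : Set (EuclideanSpace ℝ (Fin d)))
    (hSne : S.Nonempty)
    (hSmin : ∀ s ∈ S, ∀ y, f s ≤ f y)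
    (fstar : ℝ) (hfstar : ∀ s ∈ S, f s = fstar)
    (proj : EuclideanSpace ℝ (Fin d) → EuclideanSpace ℝ (Fin d))
    (hproj : ∀ y, proj y ∈ St ∧ ∀ z ∈ St, ‖y - proj y‖ ≤ ‖y - z‖)
    (L c₁ c₂ : ℝ) (hL : 0 < L) (hc₁ : 0 < c₁)
    (hass : ∀ y, c₁ * (f y - fstar + 1 / (2 * L) * ‖gradient f y‖ ^ 2) - c₂ ≤
      ⟪gradient f y, y - proj y⟫)
    (x : ℕ → EuclideanSpace ℝ (Fin d)) (γ : ℕ → ℝ)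
    (hupd : ∀ k, x (k + 1) = x k - γ k • gradient f (x k))
    (hγ : ∀ k, γ k = c₁ * (f (x k) - fstar) / ‖gradient f (x k)‖ ^ 2 + c₁ / (2 * L))
    (K : ℕ) :
    (Finset.range (K + 1)).inf' ⟨0, Finset.mem_range.mpr (Nat.succ_pos K)⟩
        (fun k => f (x k) - fstar + 1 / (2 * L) * ‖gradient f (x k)‖ ^ 2) ≤
      2 * L * ‖x 0 - proj (x 0)‖ ^ 2 / (c₁ ^ 2 * (K + 1)) + 2 * c₂ / c₁ := by
  obtain ⟨s, hs⟩ := hSne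
  have hfstar_le : ∀ y, fstar ≤ f y := hfstar s hs ▸ hSmin s hs
  set m := (Finset.range (K + 1)).inf' ⟨0, Finset.mem_range.mpr (Nat.succ_pos K)⟩
    (fun k => f (x k) - fstar + 1 / (2 * L) * ‖gradient f (x k)‖ ^ 2)
  have hD₀ : 0 ≤ 2 * L * ‖x 0 - proj (x 0)‖ ^ 2 / (c₁ ^ 2 * (K + 1)) := by positivity
  by_cases hsmall : c₁ * m ≤ 2 * c₂
  · linarith [(le_div_iff₀' hc₁).mpr hsmall]
  have hstep : ∀ k < K + 1, ‖x (k + 1) - proj (x (k + 1))‖ ^ 2 ≤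
      ‖x k - proj (x k)‖ ^ 2 - c₁ / (2 * L) * (c₁ * m - 2 * c₂) := by
    intro k hk
    have hm : m ≤ f (x k) - fstar + 1 / (2 * L) * ‖gradient f (x k)‖ ^ 2 :=
      Finset.inf'_le _ (Finset.mem_range.mpr hk)
    calc ‖x (k + 1) - proj (x (k + 1))‖ ^ 2 ≤ ‖x (k + 1) - proj (x k)‖ ^ 2 := by
          gcongr
          exact (hproj _).2 _ (hproj _).1
      _ ≤ ‖x k - proj (x k)‖ ^ 2 - c₁ / (2 * L) *
            (c₁ * (f (x k) - fstar + 1 / (2 * L) * ‖gradient f (x k)‖ ^ 2) - 2 * c₂) := by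
          rw [hupd, hγ]
          exact norm_sub_stepsize_smul_sub_sq_le (sub_nonneg.mpr (hfstar_le _)) hL hc₁ (hass _)
            (by linarith [mul_le_mul_of_nonneg_left hm hc₁.le])
      _ ≤ ‖x k - proj (x k)‖ ^ 2 - c₁ / (2 * L) * (c₁ * m - 2 * c₂) := by gcongr
  have hsteps := mul_le_of_forall_lt_succ_le_sub (D := fun k => ‖x k - proj (x k)‖ ^ 2) hstep
    (by positivity)
  rw [← sub_le_iff_le_add, le_div_iff₀ (by positivity)]
  push_cast at hsteps
  field_simp at hsteps ⊢
  linarith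

/-- Example 4: under the unified parametric assumption with progress function
`P(x) = f(x) − f⋆ + (1/(2L))‖∇f(x)‖²` and the stepsize
`γᵏ = c₁(f(xᵏ) − f⋆)/‖∇f(xᵏ)‖² + c₁/(2L)`, gradient descent achieves an
`O(1/K)` rate for the minimum of the progress function up to `2c₂/c₁`. -/
theorem progress_with_gradient_term_rate
    {d : ℕ} (f : EuclideanSpace ℝ (Fin d) → ℝ)
    (hf : ContDiff ℝ 1 f)
    (S St : Set (EuclideanSpace ℝ (Fin d)))
    (hSne : S.Nonempty)
    (hSmin : ∀ s ∈ S, ∀ y, f s ≤ f y)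
    (fstar : ℝ) (hfstar : ∀ s ∈ S, f s = fstar)
    (hStS : St ⊆ S) (hStne : St.Nonempty)
    (proj : EuclideanSpace ℝ (Fin d) → EuclideanSpace ℝ (Fin d))
    (hproj : ∀ y, proj y ∈ St ∧ ∀ z ∈ St, ‖y - proj y‖ ≤ ‖y - z‖)
    (L c₁ c₂ : ℝ) (hL : 0 < L) (hc₁ : 0 < c₁) (hc₂ : 0 ≤ c₂)
    (hass : ∀ y, c₁ * (f y - fstar + 1 / (2 * L) * ‖gradient f y‖ ^ 2) - c₂ ≤
      ⟪gradient f y, y - proj y⟫)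
    (x : ℕ → EuclideanSpace ℝ (Fin d)) (γ : ℕ → ℝ)
    (hupd : ∀ k, x (k + 1) = x k - γ k • gradient f (x k))
    (hγ : ∀ k, γ k = c₁ * (f (x k) - fstar) / ‖gradient f (x k)‖ ^ 2 + c₁ / (2 * L))
    (K : ℕ) :
    (Finset.range (K + 1)).inf' ⟨0, Finset.mem_range.mpr (Nat.succ_pos K)⟩
        (fun k => f (x k) - fstar + 1 / (2 * L) * ‖gradient f (x k)‖ ^ 2) ≤
      2 * L * ‖x 0 - proj (x 0)‖ ^ 2 / (c₁ ^ 2 * (K + 1)) + 2 * c₂ / c₁ :=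
  progress_with_gradient_term_rate_general f S St hSne hSmin fstar hfstar proj hproj L c₁ c₂ hL hc₁
    hass x γ hupd hγ K
end

section
/- Let f : ℝ^d → ℝ be continuously differentiable with a nonempty set S of global minimizers, minimal value f⋆ = 0, S̃ = S, and suppose ‖∇f(x)‖ ≤ G for all x ∈ ℝ^d and there exist c₁ > 0, c₂ ≥ 0 such that ⟨∇f(x), x − proj_{S}(x)⟩ ≥ c₁ f(x) − c₂ for all x ∈ ℝ^d. Let x^{k+1} = x^k − γ^k ∇f(x^k) with γ^k = c₁ f(x^k)/‖∇f(x^k)‖². Then for every K ≥ 0: min_{0≤k≤K} f(x^k) ≤ G ‖x^0 − x^0_p‖/(c₁ √(K+1)) + 2c₂/c₁, where x^0_p := proj_{S}(x^0). -/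
/-!
Let `r_k = ‖xᵏ - proj xᵏ‖` and `A = c₁ m - 2c₂`, where `m` is the minimum of `f(xᵏ)` for `k ≤ K`;
only `A > 0` needs an argument. Expanding the Polyak step and using the aiming condition at `xᵏ`
gives `‖xᵏ⁺¹ - proj xᵏ‖² ≤ r_k² - γᵏ (c₁ f(xᵏ) - 2c₂)`, and with `‖∇f‖ ≤ G` the decrease is at least
`A² / G²`. Since `proj xᵏ ∈ S`, also `r_{k+1} ≤ ‖xᵏ⁺¹ - proj xᵏ‖`, so after `K + 1` steps
`(K + 1) A² / G² ≤ r_0²`, i.e. `A ≤ G r_0 / √(K + 1)`.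
-/

open scoped RealInnerProductSpace

theorem sq_div_sq_le_mul_sub_div_sq {a c A G t : ℝ} (hc : 0 ≤ c) (hA : 0 < A)
    (hAa : A ≤ a - 2 * c) (ht : 0 < t) (htG : t ≤ G) :
    A ^ 2 / G ^ 2 ≤ a * (a - 2 * c) / t ^ 2 := by
  have hAa' : A ≤ a := by linarith
  refine div_le_div₀ (by nlinarith) ?_ (by positivity) (pow_le_pow_left₀ ht.le htG 2)
  rw [sq]
  exact mul_le_mul hAa' hAa hA.le (by linarith)

theorem le_sub_mul_of_forall_lt_le_sub {u : ℕ → ℝ} {δ : ℝ} {n : ℕ}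
    (h : ∀ k < n, u (k + 1) ≤ u k - δ) : u n ≤ u 0 - n * δ := by
  induction n with
  | zero => simp
  | succ n ih =>
    have hprev := ih fun k hk => h k (by omega)
    have hlast := h n (by omega)
    push_cast
    linarith

theorem le_mul_div_sqrt_of_mul_sq_div_sq_le {A G r n : ℝ} (hn : 0 < n) (hG : 0 < G)
    (hr : 0 ≤ r) (h : n * (A ^ 2 / G ^ 2) ≤ r ^ 2) : A ≤ G * r / √n := by
  rw [← mul_div_assoc, div_le_iff₀ (by positivity)] at h
  rw [le_div_iff₀ (Real.sqrt_pos.2 hn)]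
  refine (le_abs_self _).trans (abs_le_of_sq_le_sq ?_ (by positivity))
  rw [mul_pow, mul_pow, Real.sq_sqrt hn.le]
  linarith

section PolyakStep

variable {E : Type*} [NormedAddCommGroup E] [InnerProductSpace ℝ E]

/-- The step size `a / ‖g‖²` is `0` when `g = 0`, in which case both sides are `‖v‖²`. -/
theorem norm_sub_polyak_step_sq_le {g v : E} {a c : ℝ} (ha : 0 ≤ a) (hgv : a - c ≤ ⟪g, v⟫) :
    ‖v - (a / ‖g‖ ^ 2) • g‖ ^ 2 ≤ ‖v‖ ^ 2 - a * (a - 2 * c) / ‖g‖ ^ 2 := by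
  set γ := a / ‖g‖ ^ 2 with hγ
  have hγ_nonneg : 0 ≤ γ := by positivity
  have hγg : γ ^ 2 * ‖g‖ ^ 2 = γ * a := by
    rcases eq_or_ne ‖g‖ 0 with h | h
    · simp [hγ, h]
    · rw [hγ]; field_simp
  have hinner : γ * (a - c) ≤ γ * ⟪g, v⟫ := mul_le_mul_of_nonneg_left hgv hγ_nonneg
  calc ‖v - γ • g‖ ^ 2 = ‖v‖ ^ 2 - 2 * (γ * ⟪g, v⟫) + γ ^ 2 * ‖g‖ ^ 2 := by
        rw [norm_sub_sq_real, real_inner_smul_right, real_inner_comm, norm_smul, mul_pow,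
          Real.norm_eq_abs, sq_abs]
    _ ≤ ‖v‖ ^ 2 - γ * (a - 2 * c) := by rw [hγg]; linarith
    _ = ‖v‖ ^ 2 - a * (a - 2 * c) / ‖g‖ ^ 2 := by rw [hγ]; ring

end PolyakStep

namespace AimingCondition

variable {E : Type*} [NormedAddCommGroup E] [InnerProductSpace ℝ E]
  {f : E → ℝ} {g proj : E → E} {S : Set E} {G c₁ c₂ A : ℝ}

theorem grad_ne_zero (hc₂ : 0 ≤ c₂) (hass : ∀ y, c₁ * f y - c₂ ≤ ⟪g y, y - proj y⟫)
    (hA : 0 < A) {y : E} (hAy : A ≤ c₁ * f y - 2 * c₂) : g y ≠ 0 := by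
  intro hgy
  have := hass y
  rw [hgy, inner_zero_left] at this
  linarith

theorem sq_dist_proj_step_le (hproj : ∀ y, proj y ∈ S ∧ ∀ z ∈ S, ‖y - proj y‖ ≤ ‖y - z‖)
    (hg : ∀ y, ‖g y‖ ≤ G) (hc₂ : 0 ≤ c₂)
    (hass : ∀ y, c₁ * f y - c₂ ≤ ⟪g y, y - proj y⟫) (hA : 0 < A) {y z : E}
    (hAy : A ≤ c₁ * f y - 2 * c₂) (hz : z = y - (c₁ * f y / ‖g y‖ ^ 2) • g y) :
    ‖z - proj z‖ ^ 2 ≤ ‖y - proj y‖ ^ 2 - A ^ 2 / G ^ 2 := by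
  have hgy : 0 < ‖g y‖ := norm_pos_iff.2 (grad_ne_zero hc₂ hass hA hAy)
  have hz_proj : z - proj y = (y - proj y) - (c₁ * f y / ‖g y‖ ^ 2) • g y := by
    rw [hz]; abel
  have hproj_le : ‖z - proj z‖ ≤ ‖z - proj y‖ := (hproj z).2 _ (hproj y).1
  calc ‖z - proj z‖ ^ 2 ≤ ‖z - proj y‖ ^ 2 := by gcongr
    _ ≤ ‖y - proj y‖ ^ 2 - c₁ * f y * (c₁ * f y - 2 * c₂) / ‖g y‖ ^ 2 :=
        hz_proj ▸ norm_sub_polyak_step_sq_le (by linarith) (hass y)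
    _ ≤ ‖y - proj y‖ ^ 2 - A ^ 2 / G ^ 2 :=
        sub_le_sub_left (sq_div_sq_le_mul_sub_div_sq hc₂ hA hAy hgy (hg y)) _

theorem le_rate (hproj : ∀ y, proj y ∈ S ∧ ∀ z ∈ S, ‖y - proj y‖ ≤ ‖y - z‖)
    (hg : ∀ y, ‖g y‖ ≤ G) (hc₂ : 0 ≤ c₂)
    (hass : ∀ y, c₁ * f y - c₂ ≤ ⟪g y, y - proj y⟫) {x : ℕ → E}
    (hx : ∀ k, x (k + 1) = x k - (c₁ * f (x k) / ‖g (x k)‖ ^ 2) • g (x k)) {n : ℕ} (hn : 0 < n)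
    (hAx : ∀ k < n, A ≤ c₁ * f (x k) - 2 * c₂) :
    A ≤ G * ‖x 0 - proj (x 0)‖ / √n := by
  rcases le_or_gt A 0 with hA | hA
  · have hG : 0 ≤ G := (norm_nonneg _).trans (hg (x 0))
    exact hA.trans (by positivity)
  have hG : 0 < G :=
    (norm_pos_iff.2 (grad_ne_zero hc₂ hass hA (hAx 0 hn))).trans_le (hg (x 0))
  have hdist : ‖x n - proj (x n)‖ ^ 2 ≤ ‖x 0 - proj (x 0)‖ ^ 2 - n * (A ^ 2 / G ^ 2) :=
    le_sub_mul_of_forall_lt_le_sub (u := fun k => ‖x k - proj (x k)‖ ^ 2) fun k hk =>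
      sq_dist_proj_step_le hproj hg hc₂ hass hA (hAx k hk) (hx k)
  exact le_mul_div_sqrt_of_mul_sq_div_sq_le (by exact_mod_cast hn) hG (norm_nonneg _)
    (by linarith [sq_nonneg ‖x n - proj (x n)‖])

end AimingCondition

theorem aiming_condition_bounded_gradient_rate_general
    {d : ℕ} (f : EuclideanSpace ℝ (Fin d) → ℝ)
    (S : Set (EuclideanSpace ℝ (Fin d)))
    (proj : EuclideanSpace ℝ (Fin d) → EuclideanSpace ℝ (Fin d))
    (hproj : ∀ y, proj y ∈ S ∧ ∀ z ∈ S, ‖y - proj y‖ ≤ ‖y - z‖)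
    (G : ℝ) (hG : ∀ y, ‖gradient f y‖ ≤ G)
    (c₁ c₂ : ℝ) (hc₁ : 0 < c₁) (hc₂ : 0 ≤ c₂)
    (hass : ∀ y, c₁ * f y - c₂ ≤ ⟪gradient f y, y - proj y⟫)
    (x : ℕ → EuclideanSpace ℝ (Fin d)) (γ : ℕ → ℝ)
    (hupd : ∀ k, x (k + 1) = x k - γ k • gradient f (x k))
    (hγ : ∀ k, γ k = c₁ * f (x k) / ‖gradient f (x k)‖ ^ 2)
    (K : ℕ) :
    (Finset.range (K + 1)).inf' ⟨0, Finset.mem_range.mpr (Nat.succ_pos K)⟩ (fun k => f (x k)) ≤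
      G * ‖x 0 - proj (x 0)‖ / (c₁ * Real.sqrt (K + 1)) + 2 * c₂ / c₁ := by
  set m := (Finset.range (K + 1)).inf' ⟨0, Finset.mem_range.mpr (Nat.succ_pos K)⟩
    (fun k => f (x k))
  have hrate : c₁ * m - 2 * c₂ ≤ G * ‖x 0 - proj (x 0)‖ / √(K + 1) := by
    have := AimingCondition.le_rate hproj hG hc₂ hass (x := x) (A := c₁ * m - 2 * c₂) (fun k => by rw [hupd k, hγ k])
      K.succ_pos fun k hk => sub_le_sub_right (mul_le_mul_of_nonneg_left
        (Finset.inf'_le (fun k => f (x k)) (Finset.mem_range.2 hk)) hc₁.le) _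
    exact_mod_cast this
  calc m = ((c₁ * m - 2 * c₂) + 2 * c₂) / c₁ := by field_simp; ring
    _ ≤ (G * ‖x 0 - proj (x 0)‖ / √(K + 1) + 2 * c₂) / c₁ := by gcongr
    _ = G * ‖x 0 - proj (x 0)‖ / (c₁ * √(K + 1)) + 2 * c₂ / c₁ := by
        rw [add_div, div_div, mul_comm c₁]

/-- Example 5 (bounded-gradient case): under the relaxed aiming condition
`⟨∇f(x), x − proj_S(x)⟩ ≥ c₁ f(x) − c₂` with `f⋆ = 0`, bounded gradients, and the
Polyak-type stepsize `γᵏ = c₁ f(xᵏ)/‖∇f(xᵏ)‖²`, gradient descent achieves an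
`O(1/√K)` rate for the minimum function value up to `2c₂/c₁`. -/
theorem aiming_condition_bounded_gradient_rate
    {d : ℕ} (f : EuclideanSpace ℝ (Fin d) → ℝ)
    (hf : ContDiff ℝ 1 f)
    (S : Set (EuclideanSpace ℝ (Fin d)))
    (hSne : S.Nonempty)
    (hSmin : ∀ s ∈ S, ∀ y, f s ≤ f y)
    (hfstar : ∀ s ∈ S, f s = 0)
    (proj : EuclideanSpace ℝ (Fin d) → EuclideanSpace ℝ (Fin d))
    (hproj : ∀ y, proj y ∈ S ∧ ∀ z ∈ S, ‖y - proj y‖ ≤ ‖y - z‖)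
    (G : ℝ) (hG : ∀ y, ‖gradient f y‖ ≤ G)
    (c₁ c₂ : ℝ) (hc₁ : 0 < c₁) (hc₂ : 0 ≤ c₂)
    (hass : ∀ y, c₁ * f y - c₂ ≤ ⟪gradient f y, y - proj y⟫)
    (x : ℕ → EuclideanSpace ℝ (Fin d)) (γ : ℕ → ℝ)
    (hupd : ∀ k, x (k + 1) = x k - γ k • gradient f (x k))
    (hγ : ∀ k, γ k = c₁ * f (x k) / ‖gradient f (x k)‖ ^ 2)
    (K : ℕ) :
    (Finset.range (K + 1)).inf' ⟨0, Finset.mem_range.mpr (Nat.succ_pos K)⟩ (fun k => f (x k)) ≤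
      G * ‖x 0 - proj (x 0)‖ / (c₁ * Real.sqrt (K + 1)) + 2 * c₂ / c₁ :=
  aiming_condition_bounded_gradient_rate_general f S proj hproj G hG c₁ c₂ hc₁ hc₂ hass x γ hupd hγ
    K
end

section
/- Define f₂ : ℝ → ℝ by f₂(x) = x² for x ≥ −1 and f₂(x) = 4√(−x) − 3 for x < −1. Then f₂ is differentiable on ℝ, its unique global minimizer is x⋆ = 0 with f₂(0) = 0, and f₂ is (1/2)-weakly quasi-convex: for all x ∈ ℝ, f₂′(x) · (x − 0) ≥ (1/2) f₂(x). In particular, for x < −1 this reads 2√(−x) ≥ (1/2)(4√(−x) − 3). -/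
/-!
On `[-1, ∞)` the weak quasi-convexity inequality reads `x² / 2 ≤ 2x²`. On `(-∞, -1)` put
`s = √(-x) ≥ 1`: the derivative is `-2 / s`, so `f₂'(x) x = 2s`, which dominates `(4s - 3) / 2`.
The two branches agree to first order at `-1` (value `1`, slope `-2`), which makes `f₂`
differentiable there, and `4s - 3 ≥ 1 > 0` makes `0` the unique minimizer.
-/

open Set

theorem hasDerivAt_ite_le {g h g' h' : ℝ → ℝ} {a : ℝ}
    (hg : ∀ y ≤ a, HasDerivAt g (g' y) y) (hh : ∀ y, a ≤ y → HasDerivAt h (h' y) y)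
    (hval : g a = h a) (hder : g' a = h' a) (x : ℝ) :
    HasDerivAt (fun y => if a ≤ y then h y else g y) (if a ≤ x then h' x else g' x) x := by
  rcases lt_trichotomy x a with hx | rfl | hx
  · rw [if_neg hx.not_ge]
    refine (hg x hx.le).congr_of_eventuallyEq ?_
    filter_upwards [eventually_lt_nhds hx] with y hy
    rw [if_neg hy.not_ge]
  · rw [if_pos le_rfl]
    have left : HasDerivWithinAt (fun y => if x ≤ y then h y else g y) (h' x) (Iic x) x := by
      refine hder ▸ (hg x le_rfl).hasDerivWithinAt.congr (fun y (hy : y ≤ x) => ?_) ?_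
      · rcases hy.lt_or_eq with hy | rfl
        · rw [if_neg hy.not_ge]
        · rw [if_pos le_rfl, hval]
      · rw [if_pos le_rfl, hval]
    have right : HasDerivWithinAt (fun y => if x ≤ y then h y else g y) (h' x) (Ici x) x :=
      (hh x le_rfl).hasDerivWithinAt.congr (fun y (hy : x ≤ y) => if_pos hy) (if_pos le_rfl)
    simpa only [Iic_union_Ici, hasDerivWithinAt_univ] using left.union right
  · rw [if_pos hx.le]
    refine (hh x hx.le).congr_of_eventuallyEq ?_
    filter_upwards [eventually_gt_nhds hx] with y hy
    rw [if_pos hy.le]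

theorem hasDerivAt_sqrt_neg {x : ℝ} (hx : x < 0) :
    HasDerivAt (fun y => √(-y)) (-1 / (2 * √(-x))) x :=
  (hasDerivAt_neg x).sqrt (neg_ne_zero.2 hx.ne)

theorem hasDerivAt_four_mul_sqrt_neg_sub_three {x : ℝ} (hx : x < 0) :
    HasDerivAt (fun y => 4 * √(-y) - 3) (-2 / √(-x)) x :=
  (((hasDerivAt_sqrt_neg hx).const_mul 4).sub_const 3).congr_deriv (by ring)

theorem hasDerivAt_ite_sq_four_mul_sqrt_neg (x : ℝ) :
    HasDerivAt (fun y : ℝ => if -1 ≤ y then y ^ 2 else 4 * √(-y) - 3)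
      (if -1 ≤ x then 2 * x else -2 / √(-x)) x :=
  hasDerivAt_ite_le (fun y hy => hasDerivAt_four_mul_sqrt_neg_sub_three (by linarith))
    (fun y _ => by simpa using hasDerivAt_pow 2 y) (by norm_num) (by norm_num) x

theorem neg_two_div_sqrt_neg_mul_self {x : ℝ} (hx : x < 0) : -2 / √(-x) * x = 2 * √(-x) := by
  have hs : 0 < √(-x) := Real.sqrt_pos.2 (neg_pos.2 hx)
  have hsq : √(-x) ^ 2 = -x := Real.sq_sqrt (neg_nonneg.2 hx.le)
  field_simp
  linarith

/-- The function `f₂` (piecewise `x²` for `x ≥ −1` and `4√(−x) − 3` for `x < −1`)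
is differentiable, has `0` as its unique global minimizer with `f₂(0) = 0`, and is
`(1/2)`-weakly quasi-convex; in particular, for `x < −1` the weak quasi-convexity
inequality reads `2√(−x) ≥ (1/2)(4√(−x) − 3)`. -/
theorem f2_weakly_quasi_convex
    (f₂ : ℝ → ℝ)
    (hf₂ : ∀ x : ℝ, f₂ x = if -1 ≤ x then x ^ 2 else 4 * Real.sqrt (-x) - 3) :
    Differentiable ℝ f₂
    ∧ f₂ 0 = 0
    ∧ (∀ x : ℝ, x ≠ 0 → f₂ 0 < f₂ x)
    ∧ (∀ x : ℝ, (1 / 2) * f₂ x ≤ deriv f₂ x * (x - 0))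
    ∧ (∀ x : ℝ, x < -1 → (1 / 2) * (4 * Real.sqrt (-x) - 3) ≤ 2 * Real.sqrt (-x)) := by
  have hderiv (x : ℝ) := funext hf₂ ▸ hasDerivAt_ite_sq_four_mul_sqrt_neg x
  have sqrt_branch_ge_one {x : ℝ} (hx : ¬-1 ≤ x) : 1 ≤ √(-x) := Real.one_le_sqrt.2 (by linarith)
  refine ⟨fun x => (hderiv x).differentiableAt, by simp [hf₂], fun x hx => ?_,
    fun x => ?_, fun x _ => by linarith [Real.sqrt_nonneg (-x)]⟩
  · rw [hf₂, hf₂, if_pos (by norm_num)]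
    split_ifs with h
    · norm_num
      positivity
    · linarith [sqrt_branch_ge_one h]
  · rw [(hderiv x).deriv, hf₂, sub_zero]
    split_ifs with h
    · nlinarith [sq_nonneg x]
    · rw [neg_two_div_sqrt_neg_mul_self (by linarith)]
      linarith [sqrt_branch_ge_one h]
end
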